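/- arXiv:2502.01215 — 7 statements merged into one kernel-verified Lean document; each statement's English description precedes it below -/
import Mathlib

section
/- If G contains a clique K with vertex set V(K) of size k and edge set E(K), then for W = {m'_v : v ∈ V(K)} ∪ {m'_e : e ∈ E(K)} (so |W| = k + k(k−1)/2) the instance I_W admits a perfect stable matching; in particular it admits a stable matching covering w*. -/
/-- A Stable Roommates instance on agent type `α`: a symmetric, loopless
acceptability relation, together with, for each agent `u`, a strict linear
order `pref u` over the agents acceptable to `u`
(`pref u x y` means `u` strictly prefers `x` to `y`). -/
structure SR (α : Type*) where
  accept : α → α → Prop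
  symm : ∀ {u v}, accept u v → accept v u
  loopless : ∀ u, ¬ accept u u
  pref : α → α → α → Prop
  pref_acc : ∀ {u x y}, pref u x y → accept u x ∧ accept u y
  pref_irrefl : ∀ u x, ¬ pref u x x
  pref_trans : ∀ {u x y z}, pref u x y → pref u y z → pref u x z
  pref_total : ∀ {u x y}, accept u x → accept u y → x ≠ y → pref u x y ∨ pref u y x

namespace SR

variable {α : Type*}

/-- `M` is a matching in `I`: a set of acceptable pairs in which
every agent has at most one partner. -/
def IsMatching (I : SR α) (M : Finset (Sym2 α)) : Prop :=
  (∀ u v : α, s(u, v) ∈ M → I.accept u v) ∧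
  (∀ u v w : α, s(u, v) ∈ M → s(u, w) ∈ M → v = w)

/-- The pair `{u, v}` blocks the matching `M` in `I`. -/
def Blocks (I : SR α) (M : Finset (Sym2 α)) (u v : α) : Prop :=
  I.accept u v ∧ (∀ w, s(u, w) ∈ M → I.pref u v w) ∧ (∀ w, s(v, w) ∈ M → I.pref v u w)

/-- `M` is a stable matching in `I`. -/
def IsStable (I : SR α) (M : Finset (Sym2 α)) : Prop :=
  I.IsMatching M ∧ ∀ u v, ¬ I.Blocks M u v

/-- The instance obtained from `I` by deleting the acceptability of the pairs in `F`. -/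
def delPairs (I : SR α) (F : Set (Sym2 α)) : SR α where
  accept u v := I.accept u v ∧ s(u, v) ∉ F
  symm h := ⟨I.symm h.1, by rw [Sym2.eq_swap]; exact h.2⟩
  loopless u h := I.loopless u h.1
  pref u x y := I.pref u x y ∧ s(u, x) ∉ F ∧ s(u, y) ∉ F
  pref_acc h := ⟨⟨(I.pref_acc h.1).1, h.2.1⟩, ⟨(I.pref_acc h.1).2, h.2.2⟩⟩
  pref_irrefl u x h := I.pref_irrefl u x h.1
  pref_trans h1 h2 := ⟨I.pref_trans h1.1 h2.1, h1.2.1, h2.2.2⟩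
  pref_total hx hy hne :=
    (I.pref_total hx.1 hy.1 hne).imp (fun h => ⟨h, hx.2, hy.2⟩) (fun h => ⟨h, hy.2, hx.2⟩)

/-- The sub-instance of `I` induced by the agent set `T`. -/
def induce (I : SR α) (T : Set α) : SR α where
  accept u v := I.accept u v ∧ u ∈ T ∧ v ∈ T
  symm h := ⟨I.symm h.1, h.2.2, h.2.1⟩
  loopless u h := I.loopless u h.1
  pref u x y := I.pref u x y ∧ u ∈ T ∧ x ∈ T ∧ y ∈ T
  pref_acc h := ⟨⟨(I.pref_acc h.1).1, h.2.1, h.2.2.1⟩, ⟨(I.pref_acc h.1).2, h.2.1, h.2.2.2⟩⟩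
  pref_irrefl u x h := I.pref_irrefl u x h.1
  pref_trans h1 h2 := ⟨I.pref_trans h1.1 h2.1, h1.2.1, h1.2.2.1, h2.2.2.2⟩
  pref_total hx hy hne :=
    (I.pref_total hx.1 hy.1 hne).imp (fun h => ⟨h, hx.2.1, hx.2.2, hy.2.2⟩)
      (fun h => ⟨h, hx.2.1, hy.2.2, hx.2.2⟩)

/-- The instance obtained from `I` by deleting the agents in `W`. -/
def delAgents (I : SR α) (W : Set α) : SR α := I.induce Wᶜ

end SR

/-! ## The clique construction `I(G, k)` -/

/-- Agents of the instance `I(G, k)`: women `w_v`, `w_e`, selector women `s_i`, `w*`;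
men `m'_v`, `m_e`, `m'_e`, dummy men `d_i`, and `m*`.  (Agents whose index is out of
range — `we e` or `me e` or `me' e` with `e` not an edge, `sel i` with
`i ≥ k(k-1)/2`, `dum i` with `i ≥ |V| - k` — are inactive: they accept nobody.) -/
inductive CAg (V : Type*) where
  | wv : V → CAg V          -- woman `w_v`
  | we : Sym2 V → CAg V     -- woman `w_e`
  | sel : ℕ → CAg V         -- selector woman `s_i`
  | wstar : CAg V           -- woman `w*`
  | mv : V → CAg V          -- man `m'_v`
  | me : Sym2 V → CAg V     -- man `m_e`
  | me' : Sym2 V → CAg V    -- man `m'_e`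
  | dum : ℕ → CAg V         -- dummy man `d_i`
  | mstar : CAg V           -- man `m*`
  deriving DecidableEq

open CAg

/-- The acceptability lists of `I(G, k)` (from the men's side, plus `m*`'s list);
`q = k(k-1)/2` is the number of selector women and `d = |V| - k` the number of dummies. -/
def cliqueBaseAcc {V : Type*} (G : SimpleGraph V) (q d : ℕ) (x y : CAg V) : Prop :=
  (x = mstar ∧ ((∃ i < q, y = sel i) ∨ y = wstar)) ∨
  (∃ i < q, x = sel i ∧ ∃ e ∈ G.edgeSet, y = me e) ∨
  (∃ e ∈ G.edgeSet, x = me e ∧ (y = we e ∨ ∃ v ∈ e, y = wv v)) ∨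
  (∃ e ∈ G.edgeSet, x = me' e ∧ y = we e) ∨
  (∃ v : V, x = mv v ∧ y = wv v) ∨
  (∃ i < d, x = dum i ∧ ∃ v : V, y = wv v)

/-- `I` is a realization of the instance `I(G, k)`: its acceptability relation is as
prescribed, and its preferences respect all comparisons forced by the construction
(within each unordered set in a preference list the order is arbitrary). -/
def IsCliqueInstance {V : Type*} [Fintype V] (G : SimpleGraph V) (k : ℕ)
    (I : SR (CAg V)) : Prop :=
  (∀ x y, I.accept x y ↔
    (cliqueBaseAcc G (k * (k - 1) / 2) (Fintype.card V - k) x y ∨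
     cliqueBaseAcc G (k * (k - 1) / 2) (Fintype.card V - k) y x)) ∧
  -- m*: S ≻ w*
  (∀ i < k * (k - 1) / 2, I.pref mstar (sel i) wstar) ∧
  -- s: {m_e : e ∈ E} ≻ m*
  (∀ i < k * (k - 1) / 2, ∀ e ∈ G.edgeSet, I.pref (sel i) (me e) mstar) ∧
  -- m_e: w_e ≻ {w_v : v ∈ e} ≻ S
  (∀ e ∈ G.edgeSet, ∀ v ∈ e, I.pref (me e) (we e) (wv v)) ∧
  (∀ e ∈ G.edgeSet, ∀ v ∈ e, ∀ i < k * (k - 1) / 2, I.pref (me e) (wv v) (sel i)) ∧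
  (∀ e ∈ G.edgeSet, ∀ i < k * (k - 1) / 2, I.pref (me e) (we e) (sel i)) ∧
  -- w_e: m'_e ≻ m_e
  (∀ e ∈ G.edgeSet, I.pref (we e) (me' e) (me e)) ∧
  -- w_v: m'_v ≻ {m_e : e ∋ v} ≻ D
  (∀ v : V, ∀ e ∈ G.edgeSet, v ∈ e → I.pref (wv v) (mv v) (me e)) ∧
  (∀ v : V, ∀ e ∈ G.edgeSet, v ∈ e → ∀ i < Fintype.card V - k, I.pref (wv v) (me e) (dum i)) ∧
  (∀ v : V, ∀ i < Fintype.card V - k, I.pref (wv v) (mv v) (dum i))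

/-- The original agents of `I(G, k)`: everybody except the addable men `m'_v`, `m'_e`. -/
def cliqueOrig {V : Type*} [Fintype V] (G : SimpleGraph V) (k : ℕ) : Set (CAg V) :=
  {x | (∃ v : V, x = wv v) ∨ (∃ e ∈ G.edgeSet, x = we e) ∨
    (∃ i < k * (k - 1) / 2, x = sel i) ∨ x = wstar ∨
    (∃ e ∈ G.edgeSet, x = me e) ∨ (∃ i < Fintype.card V - k, x = dum i) ∨ x = mstar}

/-- The addable men `M'_V = {m'_v : v ∈ V}`. -/
def addableMV {V : Type*} : Set (CAg V) := {x | ∃ v : V, x = mv v}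

/-- The addable men `M'_E = {m'_e : e ∈ E}`. -/
def addableME {V : Type*} (G : SimpleGraph V) : Set (CAg V) :=
  {x | ∃ e ∈ G.edgeSet, x = me' e}

/-- A pair `{m_e, w_v}` with `v` an endpoint of the edge `e` is *problematic*. -/
def Problematic {V : Type*} (G : SimpleGraph V) (p : Sym2 (CAg V)) : Prop :=
  ∃ e ∈ G.edgeSet, ∃ v ∈ e, p = s(me e, wv v)

/-! Match `m*` with `w*`, `m'_v` with `w_v` for `v ∈ K`, and `w_e` with `m'_e` for `e ∈ E(K)` and
with `m_e` for the other edges. The `k(k-1)/2` selectors and the `m_e` with `e ∈ E(K)`, as well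
as the `|V| - k` dummies and the `w_v` with `v ∉ K`, form complete bipartite markets with equally
many agents on both sides, so each has a perfect stable matching by deferred acceptance; together
this covers every agent of `I_W`. An acceptable pair outside the matching then lies inside one of
the two stable markets, or has an endpoint already holding its first choice (`w_v` for `v ∈ K`,
`w_e` for `e ∈ E(K)`, `m_e` for `e ∉ E(K)`), or is `{m*, s}`, where `s` prefers every `m_e` to
`m*`. An edge with an endpoint outside `K` is not in `E(K)`, which settles the problematic pairs.

Deferred acceptance is run as a potential argument: among the states in which every woman who
rejected a man holds a proposal she prefers, one with the fewest remaining options has injective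
proposals, and these form a stable matching. -/

open Finset

namespace StableMarriage

/-- A state of men-proposing deferred acceptance: `avail a` is the set of women who have not
rejected `a` yet. -/
structure ProposalState (A B : Type*) where
  avail : A → Finset B
  nonempty : ∀ a, (avail a).Nonempty

namespace ProposalState

variable {A B : Type*} (pa : A → B → B → Prop) (pb : B → A → A → Prop) (S : ProposalState A B)

section Proposal

variable [Finite B] [∀ a, IsStrictOrder B (pa a)]

noncomputable def proposal (a : A) : B :=
  (Finite.wellFounded_of_trans_of_irrefl (pa a)).min (S.avail a) (coe_nonempty.mpr (S.nonempty a))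

lemma proposal_mem (a : A) : S.proposal pa a ∈ S.avail a :=
  WellFounded.min_mem _ _ _

lemma notMem_avail_of_pref_proposal {a : A} {b : B} (h : pa a b (S.proposal pa a)) :
    b ∉ S.avail a :=
  WellFounded.notMem_of_lt_min h

lemma proposal_congr {S' : ProposalState A B} {a : A} (h : S.avail a = S'.avail a) :
    S.proposal pa a = S'.proposal pa a := by
  unfold proposal
  congr 1
  rw [h]

def Justified : Prop :=
  ∀ a b, b ∉ S.avail a → ∃ a', S.proposal pa a' = b ∧ pb b a' a

end Proposal

def potential [Fintype A] : ℕ := ∑ a, #(S.avail a)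

variable [Fintype A] [Fintype B] [∀ a, IsStrictOrder B (pa a)] {pa pb S}

lemma Justified.exists_potential_lt [∀ b, IsStrictTotalOrder A (pb b)] (hS : S.Justified pa pb)
    (hcard : Fintype.card A = Fintype.card B) (hinj : ¬ Function.Injective (S.proposal pa)) :
    ∃ S' : ProposalState A B, S'.Justified pa pb ∧ S'.potential < S.potential := by
  classical
  obtain ⟨a₁, a₂, hprop, hne, hpref⟩ : ∃ a₁ a₂, S.proposal pa a₁ = S.proposal pa a₂ ∧ a₁ ≠ a₂ ∧
      pb (S.proposal pa a₁) a₁ a₂ := by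
    simp only [Function.Injective, not_forall] at hinj
    obtain ⟨a₁, a₂, hprop, hne⟩ := hinj
    rcases trichotomous_of (pb (S.proposal pa a₁)) a₁ a₂ with h | h | h
    · exact ⟨a₁, a₂, hprop, hne, h⟩
    · exact absurd h hne
    · exact ⟨a₂, a₁, hprop.symm, Ne.symm hne, hprop ▸ h⟩
  set b := S.proposal pa a₁
  -- Some woman receives no proposal; she has rejected nobody, so `a₂` keeps an option.
  obtain ⟨b₀, hb₀⟩ : ∃ b₀, ∀ a, S.proposal pa a ≠ b₀ := by
    by_contra! h
    exact hinj ((Fintype.bijective_iff_surjective_and_card _).mpr ⟨h, hcard⟩).1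
  have hb₀_avail : ∀ a, b₀ ∈ S.avail a := fun a => by
    by_contra h
    obtain ⟨a', ha', -⟩ := hS a b₀ h
    exact hb₀ a' ha'
  let S' : ProposalState A B :=
    { avail := Function.update S.avail a₂ ((S.avail a₂).erase b)
      nonempty := fun a => by
        rcases eq_or_ne a a₂ with rfl | h
        · exact ⟨b₀, by simpa using ⟨fun h => hb₀ a₁ h.symm, hb₀_avail a⟩⟩
        · simpa [h] using S.nonempty a }
  have hprop' : ∀ a ≠ a₂, S'.proposal pa a = S.proposal pa a := fun a ha =>
    proposal_congr _ _ (by simp [S', ha])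
  refine ⟨S', fun a c hc => ?_, ?_⟩
  · by_cases hrej : a = a₂ ∧ c = b
    · obtain ⟨rfl, rfl⟩ := hrej
      exact ⟨a₁, hprop' a₁ hne, hpref⟩
    have hc : c ∉ S.avail a := by
      rcases eq_or_ne a a₂ with rfl | h
      · have hcb : c ≠ b := fun h => hrej ⟨rfl, h⟩
        simpa [S', hcb] using hc
      · simpa [S', h] using hc
    obtain ⟨a', ha', hpref'⟩ := hS a c hc
    rcases eq_or_ne a' a₂ with rfl | h
    · obtain rfl : c = b := ha'.symm.trans hprop.symm
      exact ⟨a₁, hprop' a₁ hne, _root_.trans hpref hpref'⟩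
    · exact ⟨a', (hprop' a' h).trans ha', hpref'⟩
  · apply Finset.sum_lt_sum
    · intro a _
      exact card_le_card (by rcases eq_or_ne a a₂ with rfl | h <;> simp [S', *, erase_subset])
    · refine ⟨a₂, mem_univ _, ?_⟩
      simpa [S'] using card_erase_lt_of_mem (hprop ▸ S.proposal_mem pa a₂)

lemma Justified.exists_stable_of_injective (hS : S.Justified pa pb)
    (hcard : Fintype.card A = Fintype.card B) (hinj : Function.Injective (S.proposal pa)) :
    ∃ σ : A ≃ B, ∀ a b, pa a b (σ a) → pb b (σ.symm b) a := by
  let σ := Equiv.ofBijective _ ((Fintype.bijective_iff_injective_and_card _).mpr ⟨hinj, hcard⟩)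
  refine ⟨σ, fun a b hab => ?_⟩
  obtain ⟨a', rfl, hpref⟩ := hS a b (S.notMem_avail_of_pref_proposal pa hab)
  rwa [show σ.symm (S.proposal pa a') = a' from σ.symm_apply_apply a']

end ProposalState

theorem exists_stable_equiv {A B : Type*} [Fintype A] [Fintype B]
    (hcard : Fintype.card A = Fintype.card B) (pa : A → B → B → Prop) (pb : B → A → A → Prop)
    [∀ a, IsStrictOrder B (pa a)] [∀ b, IsStrictTotalOrder A (pb b)] :
    ∃ σ : A ≃ B, ∀ a b, pa a b (σ a) → pb b (σ.symm b) a := by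
  let S₀ : ProposalState A B :=
    ⟨fun _ => univ, fun a => univ_nonempty_iff.mpr
      (Fintype.card_pos_iff.mp (hcard ▸ Fintype.card_pos_iff.mpr ⟨a⟩))⟩
  have hS₀ : S₀.Justified pa pb := fun _ _ h => absurd (mem_univ _) h
  obtain ⟨S, hS, hmin⟩ :=
    (measure fun S : ProposalState A B => S.potential).wf.has_min {S | S.Justified pa pb} ⟨S₀, hS₀⟩
  by_cases hinj : Function.Injective (S.proposal pa)
  · exact hS.exists_stable_of_injective hcard hinj
  · obtain ⟨S', hS', hlt⟩ := hS.exists_potential_lt hcard hinj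
    exact absurd hlt (hmin S' hS')

end StableMarriage

namespace SR

variable {α : Type*} (I : SR α)

lemma pref_asymm {u x y : α} (h : I.pref u x y) : ¬ I.pref u y x :=
  fun h' => I.pref_irrefl u x (I.pref_trans h h')

lemma isStrictTotalOrder_pref_comp {ι : Type*} {u : α} {g : ι → α} (hg : Function.Injective g)
    (hacc : ∀ i, I.accept u (g i)) : IsStrictTotalOrder ι (fun i j => I.pref u (g i) (g j)) where
  trichotomous i j h₁ h₂ :=
    hg (by_contra fun hne => (I.pref_total (hacc i) (hacc j) hne).elim h₁ h₂)
  irrefl i := I.pref_irrefl u (g i)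
  trans _ _ _ := I.pref_trans

def IsStableEquiv {X Y : Type*} (f : X → α) (g : Y → α) (σ : X ≃ Y) : Prop :=
  ∀ x y, I.pref (f x) (g y) (g (σ x)) → I.pref (g y) (f (σ.symm y)) (f x)

theorem exists_isStableEquiv {X Y : Type*} [Fintype X] [Fintype Y]
    (hcard : Fintype.card X = Fintype.card Y) {f : X → α} {g : Y → α}
    (hf : Function.Injective f) (hg : Function.Injective g) (hacc : ∀ x y, I.accept (f x) (g y)) :
    ∃ σ : X ≃ Y, I.IsStableEquiv f g σ := by
  have := fun x => I.isStrictTotalOrder_pref_comp hg (hacc x)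
  have := fun y => I.isStrictTotalOrder_pref_comp hf (fun x => I.symm (hacc x y))
  exact StableMarriage.exists_stable_equiv hcard (fun x y y' => I.pref (f x) (g y) (g y'))
    (fun y x x' => I.pref (g y) (f x) (f x'))

theorem exists_isStable_induce_of_partner {T : Set α} (hT : T.Finite) {p : α → α}
    (hmaps : Set.MapsTo p T T) (hinv : ∀ x ∈ T, p (p x) = x) (hacc : ∀ x ∈ T, I.accept x (p x))
    (hstab : ∀ u ∈ T, ∀ v ∈ T, I.accept u v → I.pref u v (p u) → ¬ I.pref v u (p v)) :
    ∃ M, (I.induce T).IsStable M ∧ ∀ x ∈ T, s(x, p x) ∈ M := by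
  classical
  let M := hT.toFinset.image fun x => s(x, p x)
  have hM : ∀ u v, s(u, v) ∈ M ↔ u ∈ T ∧ v = p u := by
    intro u v
    simp only [M, mem_image, Set.Finite.mem_toFinset, Sym2.eq_iff]
    constructor
    · rintro ⟨x, hx, ⟨rfl, rfl⟩ | ⟨rfl, rfl⟩⟩
      · exact ⟨hx, rfl⟩
      · exact ⟨hmaps hx, (hinv x hx).symm⟩
    · rintro ⟨hu, rfl⟩
      exact ⟨u, hu, .inl ⟨rfl, rfl⟩⟩
  have hpartner : ∀ u ∈ T, s(u, p u) ∈ M := fun u hu => (hM u _).2 ⟨hu, rfl⟩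
  refine ⟨M, ⟨⟨fun u v huv => ?_, fun u v w h₁ h₂ => ?_⟩, ?_⟩, hpartner⟩
  · obtain ⟨hu, rfl⟩ := (hM u v).1 huv
    exact ⟨hacc u hu, hu, hmaps hu⟩
  · exact ((hM u v).1 h₁).2.trans ((hM u w).1 h₂).2.symm
  · rintro u v ⟨⟨huv, hu, hv⟩, hpu, hpv⟩
    exact hstab u hu v hv huv (hpu _ (hpartner u hu)).1 (hpv _ (hpartner v hv)).1

end SR

lemma SimpleGraph.IsClique.mem_offDiag_image_iff {V : Type*} [DecidableEq V] {G : SimpleGraph V}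
    {K : Finset V} (hK : G.IsClique (K : Set V)) {e : Sym2 V} :
    e ∈ K.offDiag.image Sym2.mk.uncurry ↔ e ∈ G.edgeSet ∧ ∀ v ∈ e, v ∈ K := by
  refine Sym2.inductionOn e fun a b => ?_
  simp only [mem_image, mem_offDiag, Prod.exists, Function.uncurry_apply_pair, Sym2.eq_iff,
    SimpleGraph.mem_edgeSet, Sym2.mem_iff, forall_eq_or_imp, forall_eq]
  constructor
  · rintro ⟨x, y, ⟨hx, hy, hxy⟩, ⟨rfl, rfl⟩ | ⟨rfl, rfl⟩⟩
    · exact ⟨hK hx hy hxy, hx, hy⟩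
    · exact ⟨hK hy hx (Ne.symm hxy), hy, hx⟩
  · rintro ⟨hab, ha, hb⟩
    exact ⟨a, b, ⟨ha, hb, hab.ne⟩, .inl ⟨rfl, rfl⟩⟩

open CAg

section Clique

variable {V : Type*} {G : SimpleGraph V} {k : ℕ} {K : Finset V}

variable (G K) in
def cliqueAddedMen : Set (CAg V) :=
  {x | ∃ v ∈ K, x = mv v} ∪ {x | ∃ e ∈ G.edgeSet, (∀ v ∈ e, v ∈ K) ∧ x = me' e}

lemma ncard_cliqueAddedMen [DecidableEq V] (hK : G.IsNClique k K) :
    (cliqueAddedMen G K).ncard = k + k * (k - 1) / 2 := by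
  have hE := fun e => hK.isClique.mem_offDiag_image_iff (e := e)
  have : cliqueAddedMen G K = ↑(K.image mv ∪ (K.offDiag.image Sym2.mk.uncurry).image me') := by
    ext x
    simp only [cliqueAddedMen]
    aesop
  rw [this, Set.ncard_coe_finset, card_union_of_disjoint (by simp [disjoint_left]),
    card_image_of_injective _ (fun _ _ => mv.inj), card_image_of_injective _ (fun _ _ => me'.inj),
    Sym2.card_image_offDiag, hK.card_eq, Nat.choose_two_right]

variable [Fintype V] {I : SR (CAg V)}

variable (G k K) in
def cliqueAgents : Set (CAg V) := cliqueOrig G k ∪ cliqueAddedMen G K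

lemma IsCliqueInstance.accept_sel_me (hI : IsCliqueInstance G k I) {i : ℕ}
    (hi : i < k * (k - 1) / 2) {e : Sym2 V} (he : e ∈ G.edgeSet) : I.accept (sel i) (me e) :=
  (hI.1 _ _).2 (.inl (.inr (.inl ⟨i, hi, rfl, e, he, rfl⟩)))

lemma IsCliqueInstance.accept_dum_wv (hI : IsCliqueInstance G k I) {i : ℕ}
    (hi : i < Fintype.card V - k) (v : V) : I.accept (dum i) (wv v) :=
  (hI.1 _ _).2 (.inl (.inr (.inr (.inr (.inr (.inr ⟨i, hi, rfl, v, rfl⟩))))))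

variable [DecidableEq V]

lemma finite_cliqueAgents : (cliqueAgents G k K).Finite := by
  refine Set.Finite.subset (univ.image wv ∪ univ.image we ∪ (range (k * (k - 1) / 2)).image sel ∪
    univ.image mv ∪ univ.image me ∪ univ.image me' ∪ (range (Fintype.card V - k)).image dum ∪
    {wstar, mstar}).finite_toSet ?_
  intro x hx
  simp only [cliqueAgents, cliqueAddedMen, cliqueOrig] at hx
  aesop

/-- The matching of the proof as a partner map: `E` stands for the edge set of the clique `K`, and
`σe`, `σd` for stable matchings of the selectors with the `m_e`, `e ∈ E`, and of the dummies with
the `w_v`, `v ∉ K`. -/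
def cliquePartner {q d : ℕ} {E : Finset (Sym2 V)} (σe : Fin q ≃ E) (σd : Fin d ≃ (Kᶜ : Finset V)) :
    CAg V → CAg V
  | mstar => wstar
  | wstar => mstar
  | mv v => wv v
  | wv v => if h : v ∈ K then mv v else dum (σd.symm ⟨v, mem_compl.2 h⟩)
  | dum i => if h : i < d then wv (σd ⟨i, h⟩) else dum i
  | me' e => we e
  | we e => if e ∈ E then me' e else me e
  | me e => if h : e ∈ E then sel (σe.symm ⟨e, h⟩) else we e
  | sel i => if h : i < q then me (σe ⟨i, h⟩) else sel i

variable {E : Finset (Sym2 V)} (σe : Fin (k * (k - 1) / 2) ≃ E)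
  (σd : Fin (Fintype.card V - k) ≃ (Kᶜ : Finset V))

section Equations

variable {v : V} {e : Sym2 V} {i : ℕ}

lemma cliquePartner_wv_of_mem (hv : v ∈ K) : cliquePartner σe σd (wv v) = mv v := dif_pos hv

lemma cliquePartner_wv_of_notMem (hv : v ∉ K) :
    cliquePartner σe σd (wv v) = dum (σd.symm ⟨v, mem_compl.2 hv⟩ : ℕ) := dif_neg hv

lemma cliquePartner_dum (hi : i < Fintype.card V - k) :
    cliquePartner σe σd (dum i) = wv (σd ⟨i, hi⟩ : V) := dif_pos hi

lemma cliquePartner_we_of_mem (he : e ∈ E) : cliquePartner σe σd (we e) = me' e := if_pos he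

lemma cliquePartner_we_of_notMem (he : e ∉ E) : cliquePartner σe σd (we e) = me e := if_neg he

lemma cliquePartner_me_of_mem (he : e ∈ E) :
    cliquePartner σe σd (me e) = sel (σe.symm ⟨e, he⟩ : ℕ) := dif_pos he

lemma cliquePartner_me_of_notMem (he : e ∉ E) : cliquePartner σe σd (me e) = we e := dif_neg he

lemma cliquePartner_sel (hi : i < k * (k - 1) / 2) :
    cliquePartner σe σd (sel i) = me (σe ⟨i, hi⟩ : Sym2 V) := dif_pos hi

end Equations

lemma mapsTo_cliquePartner (hE : ∀ e, e ∈ E ↔ e ∈ G.edgeSet ∧ ∀ v ∈ e, v ∈ K) :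
    Set.MapsTo (cliquePartner σe σd) (cliqueAgents G k K) (cliqueAgents G k K) := by
  have hσe : ∀ i, (σe i : Sym2 V) ∈ E := fun i => (σe i).2
  intro x hx
  cases x <;> simp only [cliquePartner] <;> (try split_ifs) <;>
    simp_all [cliqueAgents, cliqueAddedMen, cliqueOrig]

lemma cliquePartner_cliquePartner (hE : ∀ e, e ∈ E ↔ e ∈ G.edgeSet ∧ ∀ v ∈ e, v ∈ K)
    (x : CAg V) (hx : x ∈ cliqueAgents G k K) :
    cliquePartner σe σd (cliquePartner σe σd x) = x := by
  simp only [cliqueAgents, cliqueAddedMen, cliqueOrig, Set.mem_union, Set.mem_ofPred_eq] at hx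
  cases x with
  | wv v =>
    by_cases hv : v ∈ K
    · rw [cliquePartner_wv_of_mem σe σd hv]; rfl
    · rw [cliquePartner_wv_of_notMem σe σd hv, cliquePartner_dum σe σd (σd.symm _).2]; simp
  | dum i =>
    have hi : i < Fintype.card V - k := by simpa using hx
    rw [cliquePartner_dum σe σd hi, cliquePartner_wv_of_notMem σe σd (mem_compl.1 (σd _).2)]; simp
  | sel i =>
    have hi : i < k * (k - 1) / 2 := by simpa using hx
    rw [cliquePartner_sel σe σd hi, cliquePartner_me_of_mem σe σd (σe _).2]; simp
  | me e =>
    by_cases he : e ∈ E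
    · rw [cliquePartner_me_of_mem σe σd he, cliquePartner_sel σe σd (σe.symm _).2]; simp
    · rw [cliquePartner_me_of_notMem σe σd he, cliquePartner_we_of_notMem σe σd he]
  | we e =>
    by_cases he : e ∈ E
    · rw [cliquePartner_we_of_mem σe σd he]; rfl
    · rw [cliquePartner_we_of_notMem σe σd he, cliquePartner_me_of_notMem σe σd he]
  | me' e => exact cliquePartner_we_of_mem σe σd ((hE e).2 (by simpa using hx))
  | mv v => exact cliquePartner_wv_of_mem σe σd (by simpa using hx)
  | mstar | wstar => rfl

lemma IsCliqueInstance.accept_cliquePartner (hI : IsCliqueInstance G k I)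
    (hE : ∀ e, e ∈ E ↔ e ∈ G.edgeSet ∧ ∀ v ∈ e, v ∈ K) (x : CAg V)
    (hx : x ∈ cliqueAgents G k K) : I.accept x (cliquePartner σe σd x) := by
  have hσe : ∀ i, (σe i : Sym2 V) ∈ E := fun i => (σe i).2
  rw [hI.1]
  cases x <;> simp only [cliquePartner] <;> (try split_ifs) <;>
    simp_all [cliqueAgents, cliqueAddedMen, cliqueOrig, cliqueBaseAcc]

lemma IsCliqueInstance.not_pref_cliquePartner (hI : IsCliqueInstance G k I)
    (hE : ∀ e, e ∈ E ↔ e ∈ G.edgeSet ∧ ∀ v ∈ e, v ∈ K)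
    (hσe : I.IsStableEquiv (fun i : Fin (k * (k - 1) / 2) => sel i) (fun e : E => me e) σe)
    (hσd : I.IsStableEquiv (fun i : Fin (Fintype.card V - k) => dum i)
      (fun v : (Kᶜ : Finset V) => wv v) σd)
    {u v : CAg V} (hu : u ∈ cliqueAgents G k K) (hv : v ∈ cliqueAgents G k K)
    (huv : I.accept u v) (h₁ : I.pref u v (cliquePartner σe σd u)) :
    ¬ I.pref v u (cliquePartner σe σd v) := by
  wlog hbase : cliqueBaseAcc G (k * (k - 1) / 2) (Fintype.card V - k) u v generalizing u v
  · exact fun h₂ => this hv hu (I.symm huv) h₂ (((hI.1 u v).1 huv).resolve_left hbase) h₁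
  obtain ⟨-, -, hsel, hme_we_wv, -, hme_we_sel, hwe, hwv_me, -, hwv_dum⟩ := hI
  simp only [cliqueAgents, cliqueAddedMen, cliqueOrig, Set.mem_union, Set.mem_ofPred_eq] at hu
  intro h₂
  rcases hbase with ⟨rfl, ⟨i, hi, rfl⟩ | rfl⟩ | ⟨i, hi, rfl, e, he, rfl⟩ |
    ⟨e, he, rfl, rfl | ⟨w, hw, rfl⟩⟩ | ⟨e, he, rfl, rfl⟩ | ⟨w, rfl, rfl⟩ | ⟨i, hi, rfl, w, rfl⟩
  · rw [cliquePartner_sel σe σd hi] at h₂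
    exact I.pref_asymm h₂ (hsel i hi _ ((hE _).1 (σe _).2).1)
  · exact I.pref_irrefl _ _ h₁
  · rw [cliquePartner_sel σe σd hi] at h₁
    by_cases heE : e ∈ E
    · rw [cliquePartner_me_of_mem σe σd heE] at h₂
      exact I.pref_asymm h₂ (hσe ⟨i, hi⟩ ⟨e, heE⟩ h₁)
    · rw [cliquePartner_me_of_notMem σe σd heE] at h₂
      exact I.pref_asymm h₂ (hme_we_sel e he i hi)
  · by_cases heE : e ∈ E
    · rw [cliquePartner_we_of_mem σe σd heE] at h₂
      exact I.pref_asymm h₂ (hwe e he)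
    · rw [cliquePartner_we_of_notMem σe σd heE] at h₂
      exact I.pref_irrefl _ _ h₂
  · by_cases hwK : w ∈ K
    · rw [cliquePartner_wv_of_mem σe σd hwK] at h₂
      exact I.pref_asymm h₂ (hwv_me w e he hw)
    · rw [cliquePartner_me_of_notMem σe σd fun heE => hwK (((hE e).1 heE).2 w hw)] at h₁
      exact I.pref_asymm h₁ (hme_we_wv e he w hw)
  · rw [cliquePartner_we_of_mem σe σd ((hE e).2 (by simpa using hu))] at h₂
    exact I.pref_irrefl _ _ h₂
  · rw [cliquePartner_wv_of_mem σe σd (by simpa using hu)] at h₂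
    exact I.pref_irrefl _ _ h₂
  · by_cases hwK : w ∈ K
    · rw [cliquePartner_wv_of_mem σe σd hwK] at h₂
      exact I.pref_asymm h₂ (hwv_dum w i hi)
    · rw [cliquePartner_dum σe σd hi] at h₁
      rw [cliquePartner_wv_of_notMem σe σd hwK] at h₂
      exact I.pref_asymm h₂ (hσd ⟨i, hi⟩ ⟨w, mem_compl.2 hwK⟩ h₁)

end Clique

/-- If `G` contains a clique `K` with `k` vertices, then for
`W = {m'_v : v ∈ K} ∪ {m'_e : e an edge of K}` (so `|W| = k + k(k-1)/2`), the
instance `I_W` admits a perfect stable matching; in particular it admits a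
stable matching covering `w*`. -/
theorem csm_addAg_clique_forward {V : Type*} [Fintype V] [DecidableEq V]
    (G : SimpleGraph V) (k : ℕ) (I : SR (CAg V)) (hI : IsCliqueInstance G k I)
    (K : Finset V) (hK : G.IsNClique k K) :
    ∀ W : Set (CAg V),
      W = {x | ∃ v ∈ K, x = CAg.mv v} ∪
          {x | ∃ e ∈ G.edgeSet, (∀ v ∈ e, v ∈ K) ∧ x = CAg.me' e} →
      W.ncard = k + k * (k - 1) / 2 ∧
      ∃ M : Finset (Sym2 (CAg V)),
        (I.induce (cliqueOrig G k ∪ W)).IsStable M ∧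
        (∀ x ∈ cliqueOrig G k ∪ W, ∃ y, s(x, y) ∈ M) ∧
        (∃ y, s(CAg.wstar, y) ∈ M) := by
  rintro W rfl
  set E := K.offDiag.image Sym2.mk.uncurry
  have hE (e : Sym2 V) : e ∈ E ↔ e ∈ G.edgeSet ∧ ∀ v ∈ e, v ∈ K :=
    hK.isClique.mem_offDiag_image_iff
  obtain ⟨σe, hσe⟩ := I.exists_isStableEquiv (f := fun i : Fin (k * (k - 1) / 2) => sel i)
    (g := fun e : E => me e)
    (by rw [Fintype.card_fin, Fintype.card_coe, Sym2.card_image_offDiag, hK.card_eq,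
      Nat.choose_two_right])
    (fun _ _ h => Fin.ext (sel.inj h)) (fun _ _ h => Subtype.ext (me.inj h))
    (fun i e => hI.accept_sel_me i.2 ((hE e).1 e.2).1)
  obtain ⟨σd, hσd⟩ := I.exists_isStableEquiv (f := fun i : Fin (Fintype.card V - k) => dum i)
    (g := fun v : (Kᶜ : Finset V) => wv v)
    (by rw [Fintype.card_fin, Fintype.card_coe, card_compl, hK.card_eq])
    (fun _ _ h => Fin.ext (dum.inj h)) (fun _ _ h => Subtype.ext (wv.inj h))
    (fun i v => hI.accept_dum_wv i.2 v)
  obtain ⟨M, hM, hcover⟩ := I.exists_isStable_induce_of_partner finite_cliqueAgents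
    (mapsTo_cliquePartner σe σd hE) (cliquePartner_cliquePartner σe σd hE)
    (hI.accept_cliquePartner σe σd hE)
    (fun u hu v hv => hI.not_pref_cliquePartner σe σd hE hσe hσd hu hv)
  exact ⟨ncard_cliqueAddedMen hK, M, hM, fun x hx => ⟨_, hcover x hx⟩,
    ⟨_, hcover wstar (by simp [cliqueAgents, cliqueOrig])⟩⟩
end

section
/- Let W ⊆ M'_V ∪ M'_E and let M be a stable matching in I_W covering w* that contains a problematic pair {m_e,w_v} (where v is an endpoint of e). Then m'_e ∈ W and M(w_e) = m'_e, and for W' = (W ∖ {m'_e}) ∪ {m'_v} (so |W'| ≤ |W|), the matching M' = (M ∖ {{m_e,w_v},{m'_e,w_e}}) ∪ {{m_e,w_e},{m'_v,w_v}} is a stable matching in I_{W'} that covers w* and contains strictly fewer problematic pairs than M. -/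
open CAg

/-!
Stability of `M` forces `w_e` to be matched to `m'_e`: otherwise `m_e`, who is with `w_v`, and
`w_e` would block `M`. After the exchange, none of the five agents whose situation changed can
take part in a blocking pair: `m_e`, `w_v` and `m'_v` hold their first choices, the only other
candidate `m'_e` of `w_e` has left, and `m'_e` is absent. A blocking pair of `M'` would therefore
consist of agents keeping their partners from `M`, and would already block `M`.
-/

theorem Set.ncard_insert_sdiff_singleton_le {α : Type*} {s : Set α} {b : α} (a : α)
    (hb : b ∈ s) : (insert a (s \ {b})).ncard ≤ s.ncard := by
  by_cases ha : a ∈ s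
  · obtain rfl | hab := eq_or_ne a b
    · rw [Set.insert_sdiff_singleton, Set.insert_eq_of_mem ha]
    · rw [Set.insert_eq_of_mem (Set.mem_sdiff_singleton.2 ⟨ha, hab⟩)]
      exact Set.ncard_sdiff_singleton_le s b
  · exact (Set.ncard_exchange ha hb).le

theorem Finset.ncard_setOf_mem_and_lt {β : Type*} {M M' : Finset β} {P : β → Prop} {p : β}
    (hsub : ∀ q ∈ M', P q → q ∈ M) (hpM : p ∈ M) (hpM' : p ∉ M') (hp : P p) :
    {q | q ∈ M' ∧ P q}.ncard < {q | q ∈ M ∧ P q}.ncard := by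
  have hsubset : {q | q ∈ M' ∧ P q} ⊆ {q | q ∈ M ∧ P q} := fun q hq => ⟨hsub q hq.1 hq.2, hq.2⟩
  have hssub := (Set.ssubset_iff_of_subset hsubset).2 ⟨p, ⟨hpM, hp⟩, fun h => hpM' h.1⟩
  exact Set.ncard_lt_ncard hssub (M.finite_toSet.subset fun q hq => hq.1)

namespace SR

variable {α : Type*} {I : SR α} {T T' : Set α} {M M' : Finset (Sym2 α)}

theorem Blocks.symm {u x : α} (h : I.Blocks M u x) : I.Blocks M x u :=
  ⟨I.symm h.1, h.2.2, h.2.1⟩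

theorem not_blocks_induce_of_notMem {u : α} (hu : u ∉ T) (x : α) :
    ¬ (I.induce T).Blocks M u x :=
  fun h => hu h.1.2.1

theorem not_blocks_induce_of_best {u w : α} (hw : s(u, w) ∈ M)
    (hbest : ∀ x, I.accept u x → x ∈ T → x = w ∨ I.pref u w x) (x : α) :
    ¬ (I.induce T).Blocks M u x := by
  rintro ⟨⟨hux, -, hx⟩, hpref, -⟩
  have hxw : I.pref u x w := (hpref w hw).1
  rcases hbest x hux hx with rfl | hwx
  · exact I.pref_irrefl u x hxw
  · exact I.pref_irrefl u x (I.pref_trans hxw hwx)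

theorem IsMatching.sdiff_union [DecidableEq α] {R N : Finset (Sym2 α)}
    (hM : (I.induce T).IsMatching M) (hN : (I.induce T').IsMatching N)
    (hT : ∀ u w, s(u, w) ∈ M → u ∉ T' → s(u, w) ∈ R)
    (hcov : ∀ u x w, s(u, x) ∈ N → s(u, w) ∈ M → s(u, w) ∈ R) :
    (I.induce T').IsMatching (M \ R ∪ N) := by
  constructor
  · intro u w huw
    rcases Finset.mem_union.1 huw with h | h
    · obtain ⟨huwM, huwR⟩ := Finset.mem_sdiff.1 h
      refine ⟨(hM.1 u w huwM).1, by_contra fun hu => huwR (hT u w huwM hu),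
        by_contra fun hw => huwR ?_⟩
      rw [Sym2.eq_swap] at huwM ⊢
      exact hT w u huwM hw
    · exact hN.1 u w h
  · intro u v w hv hw
    by_cases hu : ∃ x, s(u, x) ∈ N
    · obtain ⟨x, hx⟩ := hu
      have hmemN : ∀ y, s(u, y) ∈ M \ R ∪ N → s(u, y) ∈ N := fun y hy =>
        (Finset.mem_union.1 hy).resolve_left fun h =>
          (Finset.mem_sdiff.1 h).2 (hcov u x y hx (Finset.mem_sdiff.1 h).1)
      exact hN.2 u v w (hmemN v hv) (hmemN w hw)
    · have hmemM : ∀ y, s(u, y) ∈ M \ R ∪ N → s(u, y) ∈ M := fun y hy =>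
        (Finset.mem_sdiff.1 ((Finset.mem_union.1 hy).resolve_right (not_exists.1 hu y))).1
      exact hM.2 u v w (hmemM v hv) (hmemM w hw)

theorem isMatching_pair [DecidableEq α] {a b c d : α} (hab : I.accept a b) (hcd : I.accept c d)
    (hac : a ≠ c) (had : a ≠ d) (hbc : b ≠ c) (hbd : b ≠ d) : I.IsMatching {s(a, b), s(c, d)} := by
  refine ⟨fun x y hxy => ?_, fun x y z hy hz => ?_⟩
  · simp only [Finset.mem_insert, Finset.mem_singleton, Sym2.eq_iff] at hxy
    rcases hxy with (⟨rfl, rfl⟩ | ⟨rfl, rfl⟩) | (⟨rfl, rfl⟩ | ⟨rfl, rfl⟩)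
    exacts [hab, I.symm hab, hcd, I.symm hcd]
  · simp only [Finset.mem_insert, Finset.mem_singleton, Sym2.eq_iff] at hy hz
    grind

theorem IsStable.of_agree_off (hM : (I.induce T).IsStable M)
    (hM' : (I.induce T').IsMatching M') (S : Set α) (hT : ∀ u ∈ T', u ∉ S → u ∈ T)
    (hkeep : ∀ u w, u ∉ S → s(u, w) ∈ M → s(u, w) ∈ M')
    (hS : ∀ u ∈ S, ∀ x, ¬ (I.induce T').Blocks M' u x) :
    (I.induce T').IsStable M' := by
  refine ⟨hM', fun u x hb => ?_⟩
  have hu : u ∉ S := fun hu => hS u hu x hb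
  have hx : x ∉ S := fun hx => hS x hx u hb.symm
  obtain ⟨⟨hux, huT', hxT'⟩, hpu, hpx⟩ := hb
  have huT := hT u huT' hu
  have hxT := hT x hxT' hx
  refine hM.2 u x ⟨⟨hux, huT, hxT⟩, fun w hw => ?_, fun w hw => ?_⟩
  · exact ⟨(hpu w (hkeep u w hu hw)).1, huT, hxT, (hM.1.1 u w hw).2.2⟩
  · exact ⟨(hpx w (hkeep x w hx hw)).1, hxT, huT, (hM.1.1 x w hw).2.2⟩

end SR

section CliqueInstance

variable {V : Type*} [Fintype V] {G : SimpleGraph V} {k : ℕ} {I : SR (CAg V)}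
  {e : Sym2 V} {v : V}

theorem we_mem_cliqueOrig (he : e ∈ G.edgeSet) : we e ∈ cliqueOrig G k := by
  simp [cliqueOrig, he]

theorem me_mem_cliqueOrig (he : e ∈ G.edgeSet) : me e ∈ cliqueOrig G k := by
  simp [cliqueOrig, he]

theorem wv_mem_cliqueOrig : wv v ∈ cliqueOrig G k := by
  simp [cliqueOrig]

theorem me'_notMem_cliqueOrig : me' e ∉ cliqueOrig G k := by
  simp [cliqueOrig]

namespace IsCliqueInstance

theorem accept_me_we (hI : IsCliqueInstance G k I) (he : e ∈ G.edgeSet) :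
    I.accept (me e) (we e) :=
  (hI.1 _ _).2 (Or.inl (by simp [cliqueBaseAcc, he]))

theorem accept_mv_wv (hI : IsCliqueInstance G k I) : I.accept (mv v) (wv v) :=
  (hI.1 _ _).2 (Or.inl (by simp [cliqueBaseAcc]))

theorem eq_of_accept_mv (hI : IsCliqueInstance G k I) {x : CAg V} (h : I.accept (mv v) x) :
    x = wv v := by
  rcases (hI.1 _ _).1 h with h | h <;> simp [cliqueBaseAcc] at h
  exact h

theorem eq_or_eq_of_accept_we (hI : IsCliqueInstance G k I) {x : CAg V}
    (h : I.accept (we e) x) : x = me e ∨ x = me' e := by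
  rcases (hI.1 _ _).1 h with h | h <;> simp [cliqueBaseAcc] at h
  rcases h with ⟨f, -, rfl, rfl⟩ | ⟨f, -, rfl, rfl⟩ <;> simp

theorem eq_or_pref_of_accept_me (hI : IsCliqueInstance G k I) {x : CAg V}
    (h : I.accept (me e) x) : x = we e ∨ I.pref (me e) (we e) x := by
  rcases (hI.1 _ _).1 h with h | h <;> simp [cliqueBaseAcc] at h
  · obtain ⟨he, rfl | ⟨u, hu, rfl⟩⟩ := h
    · exact Or.inl rfl
    · exact Or.inr (hI.2.2.2.1 e he u hu)
  · obtain ⟨i, hi, rfl, he⟩ := h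
    exact Or.inr (hI.2.2.2.2.2.1 e he i hi)

theorem eq_or_pref_of_accept_wv (hI : IsCliqueInstance G k I) {x : CAg V}
    (h : I.accept (wv v) x) : x = mv v ∨ I.pref (wv v) (mv v) x := by
  rcases (hI.1 _ _).1 h with h | h <;> simp [cliqueBaseAcc] at h
  rcases h with ⟨f, hf, rfl, hvf⟩ | rfl | ⟨i, hi, rfl, -⟩
  · exact Or.inr (hI.2.2.2.2.2.2.2.1 v f hf hvf)
  · exact Or.inl rfl
  · exact Or.inr (hI.2.2.2.2.2.2.2.2.2 v i hi)

end IsCliqueInstance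

end CliqueInstance

section Exchange

variable {V : Type*} [DecidableEq V] {G : SimpleGraph V} {k : ℕ} {I : SR (CAg V)}
  {W : Set (CAg V)} {M : Finset (Sym2 (CAg V))} {e : Sym2 V} {v : V}

theorem IsCliqueInstance.me'_we_mem [Fintype V] (hI : IsCliqueInstance G k I) {T : Set (CAg V)}
    (hM : (I.induce T).IsStable M) (he : e ∈ G.edgeSet) (hv : v ∈ e) (hwe : we e ∈ T)
    (hprob : s(me e, wv v) ∈ M) : s(me' e, we e) ∈ M := by
  by_contra hme'
  obtain ⟨-, hme, hwv⟩ := hM.1.1 _ _ hprob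
  refine hM.2 (me e) (we e) ⟨⟨hI.accept_me_we he, hme, hwe⟩, fun w hw => ?_, fun w hw => ?_⟩
  · obtain rfl := hM.1.2 _ _ _ hw hprob
    exact ⟨hI.2.2.2.1 e he v hv, hme, hwe, hwv⟩
  · rcases hI.eq_or_eq_of_accept_we (hM.1.1 _ _ hw).1 with rfl | rfl
    · rw [Sym2.eq_swap] at hw
      exact absurd (hM.1.2 _ _ _ hw hprob) (by simp)
    · exact absurd (Sym2.eq_swap ▸ hw) hme'

def cliqueExchange (M : Finset (Sym2 (CAg V))) (e : Sym2 V) (v : V) : Finset (Sym2 (CAg V)) :=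
  M \ {s(me e, wv v), s(me' e, we e)} ∪ {s(me e, we e), s(mv v, wv v)}

theorem mem_cliqueExchange_of_mem {p : Sym2 (CAg V)} (hp : p ∈ M) (h1 : p ≠ s(me e, wv v))
    (h2 : p ≠ s(me' e, we e)) : p ∈ cliqueExchange M e v :=
  Finset.mem_union_left _ (Finset.mem_sdiff.2 ⟨hp, by simp [h1, h2]⟩)

theorem IsCliqueInstance.isMatching_cliqueExchange [Fintype V] (hI : IsCliqueInstance G k I)
    (he : e ∈ G.edgeSet) (hM : (I.induce (cliqueOrig G k ∪ W)).IsMatching M)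
    (hprob : s(me e, wv v) ∈ M) (hme'we : s(me' e, we e) ∈ M) :
    (I.induce (cliqueOrig G k ∪ ((W \ {me' e}) ∪ {mv v}))).IsMatching (cliqueExchange M e v) := by
  have hme : ∀ w, s(me e, w) ∈ M → w = wv v := fun w hw => hM.2 _ _ _ hw hprob
  have hwv : ∀ w, s(wv v, w) ∈ M → w = me e := fun w hw =>
    hM.2 _ _ _ hw (Sym2.eq_swap ▸ hprob)
  have hme' : ∀ w, s(me' e, w) ∈ M → w = we e := fun w hw => hM.2 _ _ _ hw hme'we
  have hwe : ∀ w, s(we e, w) ∈ M → w = me' e := fun w hw =>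
    hM.2 _ _ _ hw (Sym2.eq_swap ▸ hme'we)
  have hmv : ∀ w, s(mv v, w) ∉ M := fun w hw => by
    obtain rfl := hI.eq_of_accept_mv (hM.1 _ _ hw).1
    exact absurd (hwv _ (Sym2.eq_swap ▸ hw)) (by simp)
  refine hM.sdiff_union (SR.isMatching_pair ?_ ?_ (by simp) (by simp) (by simp) (by simp))
    (fun u w huw hu => ?_) (fun u x w hux huw => ?_)
  · exact ⟨hI.accept_me_we he, Or.inl (me_mem_cliqueOrig he), Or.inl (we_mem_cliqueOrig he)⟩
  · exact ⟨hI.accept_mv_wv, Or.inr (Or.inr rfl), Or.inl wv_mem_cliqueOrig⟩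
  · obtain rfl : u = me' e := by
      have := (hM.1 u w huw).2.1
      simp only [Set.mem_union, Set.mem_sdiff, Set.mem_singleton_iff, not_or, not_and_or,
        not_not] at hu this
      tauto
    simp [hme' w huw]
  · simp only [Finset.mem_insert, Finset.mem_singleton, Sym2.eq_iff] at hux
    rcases hux with (⟨rfl, -⟩ | ⟨rfl, -⟩) | (⟨rfl, -⟩ | ⟨rfl, -⟩)
    · simp [hme w huw]
    · simp [hwe w huw]
    · exact absurd huw (hmv w)
    · simp [hwv w huw]

theorem IsCliqueInstance.isStable_cliqueExchange [Fintype V] (hI : IsCliqueInstance G k I)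
    (he : e ∈ G.edgeSet) (hM : (I.induce (cliqueOrig G k ∪ W)).IsStable M)
    (hprob : s(me e, wv v) ∈ M) (hme'we : s(me' e, we e) ∈ M) :
    (I.induce (cliqueOrig G k ∪ ((W \ {me' e}) ∪ {mv v}))).IsStable (cliqueExchange M e v) := by
  have hmewe : s(me e, we e) ∈ cliqueExchange M e v := by simp [cliqueExchange]
  have hmvwv : s(mv v, wv v) ∈ cliqueExchange M e v := by simp [cliqueExchange]
  refine hM.of_agree_off (hI.isMatching_cliqueExchange he hM.1 hprob hme'we)
    {me e, we e, wv v, mv v, me' e} (fun u hu hS => ?_) (fun u w hu huw => ?_) ?_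
  · simp only [Set.mem_union, Set.mem_sdiff, Set.mem_singleton_iff, Set.mem_insert_iff] at hu hS ⊢
    tauto
  · simp only [Set.mem_insert_iff, Set.mem_singleton_iff, not_or] at hu
    obtain ⟨hme, hwe, hwv, -, hme'⟩ := hu
    exact mem_cliqueExchange_of_mem huw (by simp [hme, hwv]) (by simp [hme', hwe])
  · rintro u (rfl | rfl | rfl | rfl | rfl)
    · exact SR.not_blocks_induce_of_best hmewe fun x hx _ => hI.eq_or_pref_of_accept_me hx
    · refine SR.not_blocks_induce_of_best (Sym2.eq_swap ▸ hmewe) fun x hx hxT => Or.inl ?_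
      refine (hI.eq_or_eq_of_accept_we hx).resolve_right ?_
      rintro rfl
      simp [me'_notMem_cliqueOrig] at hxT
    · exact SR.not_blocks_induce_of_best (Sym2.eq_swap ▸ hmvwv) fun x hx _ =>
        hI.eq_or_pref_of_accept_wv hx
    · exact SR.not_blocks_induce_of_best hmvwv fun x hx _ => Or.inl (hI.eq_of_accept_mv hx)
    · exact SR.not_blocks_induce_of_notMem (by simp [me'_notMem_cliqueOrig])

theorem ncard_problematic_cliqueExchange_lt (he : e ∈ G.edgeSet) (hv : v ∈ e)
    (hprob : s(me e, wv v) ∈ M) :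
    {p | p ∈ cliqueExchange M e v ∧ Problematic G p}.ncard <
      {p | p ∈ M ∧ Problematic G p}.ncard := by
  refine Finset.ncard_setOf_mem_and_lt (fun p hp hpP => ?_) hprob (by simp [cliqueExchange])
    ⟨e, he, v, hv, rfl⟩
  rcases Finset.mem_union.1 hp with h | h
  · exact (Finset.mem_sdiff.1 h).1
  · obtain ⟨f, -, u, -, rfl⟩ := hpP
    simp at h

end Exchange

theorem csm_addAg_clique_exchange_general {V : Type*} [Fintype V] [DecidableEq V]
    (G : SimpleGraph V) (k : ℕ) (I : SR (CAg V)) (hI : IsCliqueInstance G k I)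
    (W : Set (CAg V))
    (M : Finset (Sym2 (CAg V)))
    (hM : (I.induce (cliqueOrig G k ∪ W)).IsStable M)
    (hcov : ∃ y, s(CAg.wstar, y) ∈ M)
    (e : Sym2 V) (he : e ∈ G.edgeSet) (v : V) (hv : v ∈ e)
    (hprob : s(CAg.me e, CAg.wv v) ∈ M) :
    CAg.me' e ∈ W ∧ s(CAg.me' e, CAg.we e) ∈ M ∧
    ∀ W' : Set (CAg V), W' = (W \ {CAg.me' e}) ∪ {CAg.mv v} →
      W'.ncard ≤ W.ncard ∧
      ∀ M' : Finset (Sym2 (CAg V)),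
        M' = (M \ {s(CAg.me e, CAg.wv v), s(CAg.me' e, CAg.we e)}) ∪
             {s(CAg.me e, CAg.we e), s(CAg.mv v, CAg.wv v)} →
        (I.induce (cliqueOrig G k ∪ W')).IsStable M' ∧
        (∃ y, s(CAg.wstar, y) ∈ M') ∧
        {p : Sym2 (CAg V) | p ∈ M' ∧ Problematic G p}.ncard <
          {p : Sym2 (CAg V) | p ∈ M ∧ Problematic G p}.ncard := by
  have hme'we : s(me' e, we e) ∈ M :=
    hI.me'_we_mem hM he hv (Or.inl (we_mem_cliqueOrig he)) hprob
  have hme'W : me' e ∈ W := (hM.1.1 _ _ hme'we).2.1.resolve_left me'_notMem_cliqueOrig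
  refine ⟨hme'W, hme'we, ?_⟩
  rintro W' rfl
  refine ⟨by simpa only [Set.union_singleton] using
    Set.ncard_insert_sdiff_singleton_le (mv v) hme'W, ?_⟩
  rintro M' rfl
  obtain ⟨y, hy⟩ := hcov
  exact ⟨hI.isStable_cliqueExchange he hM hprob hme'we,
    ⟨y, mem_cliqueExchange_of_mem hy (by simp) (by simp)⟩,
    ncard_problematic_cliqueExchange_lt he hv hprob⟩

/-- Let `W ⊆ M'_V ∪ M'_E` and let `M` be a stable matching in `I_W`
covering `w*` that contains a problematic pair `{m_e, w_v}` (with `v` an endpoint of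
the edge `e`). Then `m'_e ∈ W` and `M(w_e) = m'_e`, and for
`W' = (W ∖ {m'_e}) ∪ {m'_v}` (so `|W'| ≤ |W|`), the matching
`M' = (M ∖ {{m_e,w_v},{m'_e,w_e}}) ∪ {{m_e,w_e},{m'_v,w_v}}` is a stable matching
in `I_{W'}` covering `w*` with strictly fewer problematic pairs than `M`. -/
theorem csm_addAg_clique_exchange {V : Type*} [Fintype V] [DecidableEq V]
    (G : SimpleGraph V) (k : ℕ) (I : SR (CAg V)) (hI : IsCliqueInstance G k I)
    (W : Set (CAg V)) (hW : W ⊆ addableMV ∪ addableME G)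
    (M : Finset (Sym2 (CAg V)))
    (hM : (I.induce (cliqueOrig G k ∪ W)).IsStable M)
    (hcov : ∃ y, s(CAg.wstar, y) ∈ M)
    (e : Sym2 V) (he : e ∈ G.edgeSet) (v : V) (hv : v ∈ e)
    (hprob : s(CAg.me e, CAg.wv v) ∈ M) :
    CAg.me' e ∈ W ∧ s(CAg.me' e, CAg.we e) ∈ M ∧
    ∀ W' : Set (CAg V), W' = (W \ {CAg.me' e}) ∪ {CAg.mv v} →
      W'.ncard ≤ W.ncard ∧
      ∀ M' : Finset (Sym2 (CAg V)),
        M' = (M \ {s(CAg.me e, CAg.wv v), s(CAg.me' e, CAg.we e)}) ∪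
             {s(CAg.me e, CAg.we e), s(CAg.mv v, CAg.wv v)} →
        (I.induce (cliqueOrig G k ∪ W')).IsStable M' ∧
        (∃ y, s(CAg.wstar, y) ∈ M') ∧
        {p : Sym2 (CAg V) | p ∈ M' ∧ Problematic G p}.ncard <
          {p : Sym2 (CAg V) | p ∈ M ∧ Problematic G p}.ncard :=
  csm_addAg_clique_exchange_general G k I hI W M hM hcov e he v hv hprob
end

section
/- G has an independent set of size k if and only if there exists a set A* ⊆ A' with |A*| ≤ 2|V|−k such that the instance J_{A*} admits a stable matching M' with M' ⊆ M. -/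
/-! ## The copy construction `J(G)` -/

/-- Agents of the instance `J(G)`: for each vertex `v`, the agents
`a_v, b_v, c_v` and their copies `a'_v, b'_v, c'_v`. -/
inductive JAg (V : Type*) where
  | a : V → JAg V
  | b : V → JAg V
  | c : V → JAg V
  | a' : V → JAg V
  | b' : V → JAg V
  | c' : V → JAg V
  deriving DecidableEq

/-- The acceptability lists of `J(G)`. -/
def copyBaseAcc {V : Type*} (G : SimpleGraph V) (x y : JAg V) : Prop :=
  (∃ v : V, x = JAg.a v ∧ (y = JAg.a' v ∨ y = JAg.b v ∨ y = JAg.c v)) ∨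
  (∃ u v : V, G.Adj u v ∧ x = JAg.a' u ∧ y = JAg.a' v) ∨
  (∃ v : V, x = JAg.b v ∧ y = JAg.b' v) ∨
  (∃ v : V, x = JAg.c v ∧ y = JAg.c' v)

/-- `I` is a realization of the instance `J(G)`: acceptability as prescribed, and
preferences respecting all comparisons forced by the construction (within each
unordered set the order is arbitrary). -/
def IsCopyInstance {V : Type*} (G : SimpleGraph V) (I : SR (JAg V)) : Prop :=
  (∀ x y, I.accept x y ↔ (copyBaseAcc G x y ∨ copyBaseAcc G y x)) ∧
  -- a_v: a'_v ≻ b_v ≻ c_v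
  (∀ v : V, I.pref (JAg.a v) (JAg.a' v) (JAg.b v)) ∧
  (∀ v : V, I.pref (JAg.a v) (JAg.b v) (JAg.c v)) ∧
  -- a'_v: {a'_u : {u,v} ∈ E} ≻ a_v
  (∀ u v : V, G.Adj u v → I.pref (JAg.a' v) (JAg.a' u) (JAg.a v)) ∧
  -- b_v: b'_v ≻ a_v
  (∀ v : V, I.pref (JAg.b v) (JAg.b' v) (JAg.a v)) ∧
  -- c_v: c'_v ≻ a_v
  (∀ v : V, I.pref (JAg.c v) (JAg.c' v) (JAg.a v))

/-- The original agents `A = {a_v, b_v, c_v : v ∈ V}`. -/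
def copyA {V : Type*} : Set (JAg V) :=
  {x | ∃ v : V, x = JAg.a v ∨ x = JAg.b v ∨ x = JAg.c v}

/-- The addable agents `A' = {a'_v, b'_v, c'_v : v ∈ V}`. -/
def copyA' {V : Type*} : Set (JAg V) :=
  {x | ∃ v : V, x = JAg.a' v ∨ x = JAg.b' v ∨ x = JAg.c' v}

/-- The perfect matching `M` pairing every agent of `A` with its copy in `A'`. -/
def copyM (V : Type*) [Fintype V] [DecidableEq V] : Finset (Sym2 (JAg V)) :=
  Finset.univ.image (fun v : V => s(JAg.a v, JAg.a' v)) ∪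
  Finset.univ.image (fun v : V => s(JAg.b v, JAg.b' v)) ∪
  Finset.univ.image (fun v : V => s(JAg.c v, JAg.c' v))


section Aux

open JAg

variable {V : Type*} [Fintype V] [DecidableEq V]

private lemma mem_copyM_elim {z : Sym2 (JAg V)} (hz : z ∈ copyM V) :
    ∃ v : V, z = s(a v, a' v) ∨ z = s(b v, b' v) ∨ z = s(c v, c' v) := by
  simp only [copyM, Finset.mem_union, Finset.mem_image, Finset.mem_univ, true_and] at hz
  rcases hz with (⟨v, h⟩ | ⟨v, h⟩) | ⟨v, h⟩
  · exact ⟨v, Or.inl h.symm⟩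
  · exact ⟨v, Or.inr (Or.inl h.symm)⟩
  · exact ⟨v, Or.inr (Or.inr h.symm)⟩

end Aux

/-- `G` has an independent set of size `k` iff there exists
`A* ⊆ A'` with `|A*| ≤ 2|V| − k` such that the instance `J_{A*}` admits a stable
matching `M'` with `M' ⊆ M`. -/
theorem csr_addAg_MS_iff {V : Type*} [Fintype V] [DecidableEq V]
    (G : SimpleGraph V) (k : ℕ) (hk : k ≤ Fintype.card V)
    (I : SR (JAg V)) (hI : IsCopyInstance G I) :
    (∃ X : Finset V, X.card = k ∧ ∀ u ∈ X, ∀ v ∈ X, ¬ G.Adj u v) ↔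
    (∃ Astar : Set (JAg V), Astar ⊆ copyA' ∧ Astar.ncard ≤ 2 * Fintype.card V - k ∧
      ∃ M' : Finset (Sym2 (JAg V)), M' ⊆ copyM V ∧
        (I.induce (copyA ∪ Astar)).IsStable M') := by
  classical
  open JAg in
  obtain ⟨hacc, hp1, hp2, hp3, hp4, hp5⟩ := hI
  have asym : ∀ {u x y : JAg V}, I.pref u x y → I.pref u y x → False :=
    fun h1 h2 => I.pref_irrefl _ _ (I.pref_trans h1 h2)
  constructor
  · rintro ⟨X, hXk, hXind⟩
    set S : Finset (JAg V) := X.image a' ∪ Xᶜ.image b' ∪ Xᶜ.image c' with hSdef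
    set M' : Finset (Sym2 (JAg V)) :=
      X.image (fun v => s(a v, a' v)) ∪ Xᶜ.image (fun v => s(b v, b' v)) ∪
        Xᶜ.image (fun v => s(c v, c' v)) with hMdef
    set T : Set (JAg V) := copyA ∪ (↑S : Set (JAg V)) with hTdef
    have hSa' : ∀ v : V, a' v ∈ S ↔ v ∈ X := by
      intro v; rw [hSdef]; simp
    have hSb' : ∀ v : V, b' v ∈ S ↔ v ∉ X := by
      intro v; rw [hSdef]; simp
    have hSc' : ∀ v : V, c' v ∈ S ↔ v ∉ X := by
      intro v; rw [hSdef]; simp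
    have hmem : ∀ z : Sym2 (JAg V), z ∈ M' ↔
        ((∃ v, v ∈ X ∧ s(a v, a' v) = z) ∨ (∃ v, v ∈ Xᶜ ∧ s(b v, b' v) = z) ∨
          (∃ v, v ∈ Xᶜ ∧ s(c v, c' v) = z)) := by
      intro z; rw [hMdef]; simp [Finset.mem_union, Finset.mem_image, or_assoc]
    have pa : ∀ t w, s(a t, w) ∈ M' → t ∈ X ∧ w = a' t := by
      intro t w h; rw [hmem] at h
      rcases h with ⟨v, hv, he⟩ | ⟨v, hv, he⟩ | ⟨v, hv, he⟩ <;> rw [Sym2.eq_iff] at he <;>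
        rcases he with ⟨h1, h2⟩ | ⟨h1, h2⟩
      · injection h1 with h1'; subst h1'; exact ⟨hv, h2.symm⟩
      · exact absurd h2 (by simp)
      · exact absurd h1 (by simp)
      · exact absurd h2 (by simp)
      · exact absurd h1 (by simp)
      · exact absurd h2 (by simp)
    have pa' : ∀ t w, s(a' t, w) ∈ M' → t ∈ X ∧ w = a t := by
      intro t w h; rw [hmem] at h
      rcases h with ⟨v, hv, he⟩ | ⟨v, hv, he⟩ | ⟨v, hv, he⟩ <;> rw [Sym2.eq_iff] at he <;>
        rcases he with ⟨h1, h2⟩ | ⟨h1, h2⟩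
      · exact absurd h1 (by simp)
      · injection h2 with h2'; subst h2'; exact ⟨hv, h1.symm⟩
      · exact absurd h1 (by simp)
      · exact absurd h2 (by simp)
      · exact absurd h1 (by simp)
      · exact absurd h2 (by simp)
    have pb : ∀ t w, s(b t, w) ∈ M' → t ∉ X ∧ w = b' t := by
      intro t w h; rw [hmem] at h
      rcases h with ⟨v, hv, he⟩ | ⟨v, hv, he⟩ | ⟨v, hv, he⟩ <;> rw [Sym2.eq_iff] at he <;>
        rcases he with ⟨h1, h2⟩ | ⟨h1, h2⟩
      · exact absurd h1 (by simp)
      · exact absurd h2 (by simp)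
      · injection h1 with h1'; subst h1'; exact ⟨Finset.mem_compl.1 hv, h2.symm⟩
      · exact absurd h2 (by simp)
      · exact absurd h1 (by simp)
      · exact absurd h2 (by simp)
    have pb' : ∀ t w, s(b' t, w) ∈ M' → t ∉ X ∧ w = b t := by
      intro t w h; rw [hmem] at h
      rcases h with ⟨v, hv, he⟩ | ⟨v, hv, he⟩ | ⟨v, hv, he⟩ <;> rw [Sym2.eq_iff] at he <;>
        rcases he with ⟨h1, h2⟩ | ⟨h1, h2⟩
      · exact absurd h1 (by simp)
      · exact absurd h2 (by simp)
      · exact absurd h1 (by simp)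
      · injection h2 with h2'; subst h2'; exact ⟨Finset.mem_compl.1 hv, h1.symm⟩
      · exact absurd h1 (by simp)
      · exact absurd h2 (by simp)
    have pc : ∀ t w, s(c t, w) ∈ M' → t ∉ X ∧ w = c' t := by
      intro t w h; rw [hmem] at h
      rcases h with ⟨v, hv, he⟩ | ⟨v, hv, he⟩ | ⟨v, hv, he⟩ <;> rw [Sym2.eq_iff] at he <;>
        rcases he with ⟨h1, h2⟩ | ⟨h1, h2⟩
      · exact absurd h1 (by simp)
      · exact absurd h2 (by simp)
      · exact absurd h1 (by simp)
      · exact absurd h2 (by simp)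
      · injection h1 with h1'; subst h1'; exact ⟨Finset.mem_compl.1 hv, h2.symm⟩
      · exact absurd h2 (by simp)
    have pc' : ∀ t w, s(c' t, w) ∈ M' → t ∉ X ∧ w = c t := by
      intro t w h; rw [hmem] at h
      rcases h with ⟨v, hv, he⟩ | ⟨v, hv, he⟩ | ⟨v, hv, he⟩ <;> rw [Sym2.eq_iff] at he <;>
        rcases he with ⟨h1, h2⟩ | ⟨h1, h2⟩
      · exact absurd h1 (by simp)
      · exact absurd h2 (by simp)
      · exact absurd h1 (by simp)
      · exact absurd h2 (by simp)
      · exact absurd h1 (by simp)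
      · injection h2 with h2'; subst h2'; exact ⟨Finset.mem_compl.1 hv, h1.symm⟩
    have hMa : ∀ t, t ∈ X → s(a t, a' t) ∈ M' := fun t ht =>
      (hmem _).2 (Or.inl ⟨t, ht, rfl⟩)
    have hMb : ∀ t, t ∉ X → s(b t, b' t) ∈ M' := fun t ht =>
      (hmem _).2 (Or.inr (Or.inl ⟨t, Finset.mem_compl.2 ht, rfl⟩))
    have hMc : ∀ t, t ∉ X → s(c t, c' t) ∈ M' := fun t ht =>
      (hmem _).2 (Or.inr (Or.inr ⟨t, Finset.mem_compl.2 ht, rfl⟩))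
    have hmemA : ∀ t : V, a t ∈ T := fun t => Or.inl ⟨t, Or.inl rfl⟩
    have hmemB : ∀ t : V, b t ∈ T := fun t => Or.inl ⟨t, Or.inr (Or.inl rfl)⟩
    have hmemC : ∀ t : V, c t ∈ T := fun t => Or.inl ⟨t, Or.inr (Or.inr rfl)⟩
    have hTa' : ∀ t : V, a' t ∈ T → t ∈ X := by
      rintro t (⟨v, h | h | h⟩ | h)
      · exact absurd h (by simp)
      · exact absurd h (by simp)
      · exact absurd h (by simp)
      · exact (hSa' t).1 h
    have hTb' : ∀ t : V, b' t ∈ T → t ∉ X := by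
      rintro t (⟨v, h | h | h⟩ | h)
      · exact absurd h (by simp)
      · exact absurd h (by simp)
      · exact absurd h (by simp)
      · exact (hSb' t).1 h
    have hTc' : ∀ t : V, c' t ∈ T → t ∉ X := by
      rintro t (⟨v, h | h | h⟩ | h)
      · exact absurd h (by simp)
      · exact absurd h (by simp)
      · exact absurd h (by simp)
      · exact (hSc' t).1 h
    have accA : ∀ t, t ∈ X → (I.induce T).accept (a t) (a' t) := fun t ht =>
      ⟨(I.pref_acc (hp1 t)).1, hmemA t, Or.inr ((hSa' t).2 ht)⟩
    have accB : ∀ t, t ∉ X → (I.induce T).accept (b t) (b' t) := fun t ht =>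
      ⟨(I.pref_acc (hp4 t)).1, hmemB t, Or.inr ((hSb' t).2 ht)⟩
    have accC : ∀ t, t ∉ X → (I.induce T).accept (c t) (c' t) := fun t ht =>
      ⟨(I.pref_acc (hp5 t)).1, hmemC t, Or.inr ((hSc' t).2 ht)⟩
    have hmatch : (I.induce T).IsMatching M' := by
      constructor
      · intro u v h; rw [hmem] at h
        rcases h with ⟨t, ht, he⟩ | ⟨t, ht, he⟩ | ⟨t, ht, he⟩ <;> rw [Sym2.eq_iff] at he <;>
            rcases he with ⟨h1, h2⟩ | ⟨h1, h2⟩ <;> subst h1 <;> subst h2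
        · exact accA t ht
        · exact (I.induce T).symm (accA t ht)
        · exact accB t (Finset.mem_compl.1 ht)
        · exact (I.induce T).symm (accB t (Finset.mem_compl.1 ht))
        · exact accC t (Finset.mem_compl.1 ht)
        · exact (I.induce T).symm (accC t (Finset.mem_compl.1 ht))
      · intro u v w h1 h2
        cases u with
        | a t => exact ((pa t v h1).2).trans ((pa t w h2).2).symm
        | a' t => exact ((pa' t v h1).2).trans ((pa' t w h2).2).symm
        | b t => exact ((pb t v h1).2).trans ((pb t w h2).2).symm
        | b' t => exact ((pb' t v h1).2).trans ((pb' t w h2).2).symm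
        | c t => exact ((pc t v h1).2).trans ((pc t w h2).2).symm
        | c' t => exact ((pc' t v h1).2).trans ((pc' t w h2).2).symm
    have noblock : ∀ u v, copyBaseAcc G u v → ¬ (I.induce T).Blocks M' u v := by
      rintro u v (⟨t, rfl, rfl | rfl | rfl⟩ | ⟨s, t, hadj, rfl, rfl⟩ | ⟨t, rfl, rfl⟩ |
        ⟨t, rfl, rfl⟩) ⟨hbacc, hb2, hb3⟩
      · -- u = a t, v = a' t
        have hacc' : I.accept (a t) (a' t) ∧ a t ∈ T ∧ a' t ∈ T := hbacc
        have ht : t ∈ X := hTa' t hacc'.2.2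
        have h1 : (I.induce T).pref (a t) (a' t) (a' t) := hb2 (a' t) (hMa t ht)
        exact (I.induce T).pref_irrefl _ _ h1
      · -- u = a t, v = b t
        by_cases ht : t ∈ X
        · have h1 : (I.induce T).pref (a t) (b t) (a' t) := hb2 (a' t) (hMa t ht)
          exact asym h1.1 (hp1 t)
        · have h1 : (I.induce T).pref (b t) (a t) (b' t) := hb3 (b' t) (hMb t ht)
          exact asym h1.1 (hp4 t)
      · -- u = a t, v = c t
        by_cases ht : t ∈ X
        · have h1 : (I.induce T).pref (a t) (c t) (a' t) := hb2 (a' t) (hMa t ht)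
          exact asym h1.1 (I.pref_trans (hp1 t) (hp2 t))
        · have h1 : (I.induce T).pref (c t) (a t) (c' t) := hb3 (c' t) (hMc t ht)
          exact asym h1.1 (hp5 t)
      · -- u = a' s, v = a' t, adjacent
        have hacc' : I.accept (a' s) (a' t) ∧ a' s ∈ T ∧ a' t ∈ T := hbacc
        exact hXind s (hTa' s hacc'.2.1) t (hTa' t hacc'.2.2) hadj
      · -- u = b t, v = b' t
        have hacc' : I.accept (b t) (b' t) ∧ b t ∈ T ∧ b' t ∈ T := hbacc
        have ht : t ∉ X := hTb' t hacc'.2.2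
        have h1 : (I.induce T).pref (b t) (b' t) (b' t) := hb2 (b' t) (hMb t ht)
        exact (I.induce T).pref_irrefl _ _ h1
      · -- u = c t, v = c' t
        have hacc' : I.accept (c t) (c' t) ∧ c t ∈ T ∧ c' t ∈ T := hbacc
        have ht : t ∉ X := hTc' t hacc'.2.2
        have h1 : (I.induce T).pref (c t) (c' t) (c' t) := hb2 (c' t) (hMc t ht)
        exact (I.induce T).pref_irrefl _ _ h1
    refine ⟨(↑S : Set (JAg V)), ?_, ?_, M', ?_, hmatch, ?_⟩
    · intro x hx
      rw [Finset.mem_coe, hSdef] at hx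
      simp only [Finset.mem_union, Finset.mem_image] at hx
      rcases hx with (⟨v, _, rfl⟩ | ⟨v, _, rfl⟩) | ⟨v, _, rfl⟩
      · exact ⟨v, Or.inl rfl⟩
      · exact ⟨v, Or.inr (Or.inl rfl)⟩
      · exact ⟨v, Or.inr (Or.inr rfl)⟩
    · rw [Set.ncard_coe_finset]
      have h1 := Finset.card_union_le (X.image a' ∪ Xᶜ.image b') (Xᶜ.image c')
      have h2 := Finset.card_union_le (X.image a') (Xᶜ.image b')
      have h3 := Finset.card_image_le (s := X) (f := (a' : V → JAg V))
      have h4 := Finset.card_image_le (s := Xᶜ) (f := (b' : V → JAg V))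
      have h5 := Finset.card_image_le (s := Xᶜ) (f := (c' : V → JAg V))
      have h6 : Xᶜ.card = Fintype.card V - X.card := Finset.card_compl X
      have h7 : X.card ≤ Fintype.card V := by
        simpa using Finset.card_le_univ X
      rw [hSdef]
      omega
    · intro z hz; rw [hmem] at hz
      rcases hz with ⟨t, _, rfl⟩ | ⟨t, _, rfl⟩ | ⟨t, _, rfl⟩
      · exact Finset.mem_union_left _ (Finset.mem_union_left _
          (Finset.mem_image_of_mem _ (Finset.mem_univ t)))
      · exact Finset.mem_union_left _ (Finset.mem_union_right _
          (Finset.mem_image_of_mem _ (Finset.mem_univ t)))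
      · exact Finset.mem_union_right _ (Finset.mem_image_of_mem _ (Finset.mem_univ t))
    · intro u v hb
      obtain ⟨hbacc, hb2, hb3⟩ := hb
      have hacc' : I.accept u v ∧ u ∈ T ∧ v ∈ T := hbacc
      rcases (hacc u v).1 hacc'.1 with hbase | hbase
      · exact noblock u v hbase ⟨hbacc, hb2, hb3⟩
      · exact noblock v u hbase ⟨(I.induce T).symm hbacc, hb3, hb2⟩
  · rintro ⟨Ast, hsub, hcard, M', hM'M, ⟨⟨hmacc, hmuniq⟩, hnoblk⟩⟩
    set T : Set (JAg V) := copyA ∪ Ast with hTdef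
    have hmemA : ∀ t : V, a t ∈ T := fun t => Or.inl ⟨t, Or.inl rfl⟩
    have hmemB : ∀ t : V, b t ∈ T := fun t => Or.inl ⟨t, Or.inr (Or.inl rfl)⟩
    have hmemC : ∀ t : V, c t ∈ T := fun t => Or.inl ⟨t, Or.inr (Or.inr rfl)⟩
    have hTa' : ∀ t : V, a' t ∈ T → a' t ∈ Ast := by
      rintro t (⟨v, h | h | h⟩ | h)
      · exact absurd h (by simp)
      · exact absurd h (by simp)
      · exact absurd h (by simp)
      · exact h
    have hTb' : ∀ t : V, b' t ∈ T → b' t ∈ Ast := by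
      rintro t (⟨v, h | h | h⟩ | h)
      · exact absurd h (by simp)
      · exact absurd h (by simp)
      · exact absurd h (by simp)
      · exact h
    have hTc' : ∀ t : V, c' t ∈ T → c' t ∈ Ast := by
      rintro t (⟨v, h | h | h⟩ | h)
      · exact absurd h (by simp)
      · exact absurd h (by simp)
      · exact absurd h (by simp)
      · exact h
    have pa : ∀ t w, s(a t, w) ∈ M' → w = a' t := by
      intro t w h
      obtain ⟨v, he | he | he⟩ := mem_copyM_elim (hM'M h) <;> rw [Sym2.eq_iff] at he <;>
        rcases he with ⟨h1, h2⟩ | ⟨h1, h2⟩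
      · injection h1 with h1'; subst h1'; exact h2
      · exact absurd h1 (by simp)
      · exact absurd h1 (by simp)
      · exact absurd h1 (by simp)
      · exact absurd h1 (by simp)
      · exact absurd h1 (by simp)
    have pa' : ∀ t w, s(a' t, w) ∈ M' → w = a t := by
      intro t w h
      obtain ⟨v, he | he | he⟩ := mem_copyM_elim (hM'M h) <;> rw [Sym2.eq_iff] at he <;>
        rcases he with ⟨h1, h2⟩ | ⟨h1, h2⟩
      · exact absurd h1 (by simp)
      · injection h1 with h1'; subst h1'; exact h2
      · exact absurd h1 (by simp)
      · exact absurd h1 (by simp)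
      · exact absurd h1 (by simp)
      · exact absurd h1 (by simp)
    have pb : ∀ t w, s(b t, w) ∈ M' → w = b' t := by
      intro t w h
      obtain ⟨v, he | he | he⟩ := mem_copyM_elim (hM'M h) <;> rw [Sym2.eq_iff] at he <;>
        rcases he with ⟨h1, h2⟩ | ⟨h1, h2⟩
      · exact absurd h1 (by simp)
      · exact absurd h1 (by simp)
      · injection h1 with h1'; subst h1'; exact h2
      · exact absurd h1 (by simp)
      · exact absurd h1 (by simp)
      · exact absurd h1 (by simp)
    have pc : ∀ t w, s(c t, w) ∈ M' → w = c' t := by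
      intro t w h
      obtain ⟨v, he | he | he⟩ := mem_copyM_elim (hM'M h) <;> rw [Sym2.eq_iff] at he <;>
        rcases he with ⟨h1, h2⟩ | ⟨h1, h2⟩
      · exact absurd h1 (by simp)
      · exact absurd h1 (by simp)
      · exact absurd h1 (by simp)
      · exact absurd h1 (by simp)
      · injection h1 with h1'; subst h1'; exact h2
      · exact absurd h1 (by simp)
    have hforce : ∀ v : V, a' v ∉ Ast → b' v ∈ Ast ∧ c' v ∈ Ast := by
      intro v hva
      have hAvu : ∀ w, s(a v, w) ∉ M' := by
        intro w hw
        obtain rfl := pa v w hw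
        have h3 : I.accept (a v) (a' v) ∧ a v ∈ T ∧ a' v ∈ T := hmacc _ _ hw
        exact hva (hTa' v h3.2.2)
      constructor
      · by_contra hvb
        have hBvu : ∀ w, s(b v, w) ∉ M' := by
          intro w hw
          obtain rfl := pb v w hw
          have h3 : I.accept (b v) (b' v) ∧ b v ∈ T ∧ b' v ∈ T := hmacc _ _ hw
          exact hvb (hTb' v h3.2.2)
        exact hnoblk (a v) (b v)
          ⟨⟨(I.pref_acc (hp2 v)).1, hmemA v, hmemB v⟩,
            fun w hw => absurd hw (hAvu w), fun w hw => absurd hw (hBvu w)⟩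
      · by_contra hvc
        have hCvu : ∀ w, s(c v, w) ∉ M' := by
          intro w hw
          obtain rfl := pc v w hw
          have h3 : I.accept (c v) (c' v) ∧ c v ∈ T ∧ c' v ∈ T := hmacc _ _ hw
          exact hvc (hTc' v h3.2.2)
        exact hnoblk (a v) (c v)
          ⟨⟨(I.pref_acc (hp2 v)).2, hmemA v, hmemC v⟩,
            fun w hw => absurd hw (hAvu w), fun w hw => absurd hw (hCvu w)⟩
    set X : Finset V := Finset.univ.filter (fun v => a' v ∈ Ast) with hXdef
    have hXmem : ∀ v : V, v ∈ X ↔ a' v ∈ Ast := by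
      intro v; rw [hXdef]; simp
    have hXind : ∀ u ∈ X, ∀ v ∈ X, ¬ G.Adj u v := by
      intro u hu v hv hadj
      have hu' : a' u ∈ Ast := (hXmem u).1 hu
      have hv' : a' v ∈ Ast := (hXmem v).1 hv
      refine hnoblk (a' u) (a' v)
        ⟨⟨I.symm (I.pref_acc (hp3 u v hadj)).1, Or.inr hu', Or.inr hv'⟩, ?_, ?_⟩
      · intro w hw
        obtain rfl := pa' u w hw
        exact ⟨hp3 v u hadj.symm, Or.inr hu', Or.inr hv', hmemA u⟩
      · intro w hw
        obtain rfl := pa' v w hw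
        exact ⟨hp3 u v hadj, Or.inr hv', Or.inr hu', hmemA v⟩
    have hfin : Ast.Finite := by
      apply Set.Finite.subset (Finset.finite_toSet
        (Finset.univ.image (a' : V → JAg V) ∪ Finset.univ.image (b' : V → JAg V) ∪
          Finset.univ.image (c' : V → JAg V)))
      intro x hx
      obtain ⟨v, rfl | rfl | rfl⟩ := hsub hx <;> simp
    have ia : Function.Injective (a' : V → JAg V) := by
      intro x y h; injection h
    have ib : Function.Injective (b' : V → JAg V) := by
      intro x y h; injection h
    have ic : Function.Injective (c' : V → JAg V) := by
      intro x y h; injection h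
    have d1 : Disjoint (X.image a' : Finset (JAg V)) (Xᶜ.image b') := by
      rw [Finset.disjoint_left]
      rintro x hx hy
      obtain ⟨v, _, rfl⟩ := Finset.mem_image.1 hx
      obtain ⟨w, _, h⟩ := Finset.mem_image.1 hy
      exact absurd h (by simp)
    have d2 : Disjoint (X.image a' ∪ Xᶜ.image b' : Finset (JAg V)) (Xᶜ.image c') := by
      rw [Finset.disjoint_left]
      rintro x hx hy
      obtain ⟨w, _, h⟩ := Finset.mem_image.1 hy
      rcases Finset.mem_union.1 hx with h' | h'
      · obtain ⟨v, _, rfl⟩ := Finset.mem_image.1 h'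
        exact absurd h (by simp)
      · obtain ⟨v, _, rfl⟩ := Finset.mem_image.1 h'
        exact absurd h (by simp)
    have hFsub : (↑(X.image a' ∪ Xᶜ.image b' ∪ Xᶜ.image c' : Finset (JAg V)) : Set (JAg V))
        ⊆ Ast := by
      intro x hx
      rw [Finset.mem_coe] at hx
      simp only [Finset.mem_union, Finset.mem_image, Finset.mem_compl] at hx
      rcases hx with (⟨v, hv, rfl⟩ | ⟨v, hv, rfl⟩) | ⟨v, hv, rfl⟩
      · exact (hXmem v).1 hv
      · exact (hforce v (fun h => hv ((hXmem v).2 h))).1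
      · exact (hforce v (fun h => hv ((hXmem v).2 h))).2
    have hFcard : (X.image a' ∪ Xᶜ.image b' ∪ Xᶜ.image c' : Finset (JAg V)).card
        = X.card + (Fintype.card V - X.card) + (Fintype.card V - X.card) := by
      rw [Finset.card_union_of_disjoint d2, Finset.card_union_of_disjoint d1,
        Finset.card_image_of_injective _ ia, Finset.card_image_of_injective _ ib,
        Finset.card_image_of_injective _ ic, Finset.card_compl]
    have hle : (X.image a' ∪ Xᶜ.image b' ∪ Xᶜ.image c' : Finset (JAg V)).card ≤ Ast.ncard := by
      rw [← Set.ncard_coe_finset]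
      exact Set.ncard_le_ncard hFsub hfin
    have h7 : X.card ≤ Fintype.card V := by
      simpa using Finset.card_le_univ X
    have hXk : k ≤ X.card := by omega
    obtain ⟨Y, hYX, hYcard⟩ := Finset.exists_subset_card_eq hXk
    exact ⟨Y, hYcard, fun u hu v hv => hXind u (hYX hu) v (hYX hv)⟩
end

section
/- If X ⊆ V is an independent set of size k in G and A*_X = {a'_v : v∈X} ∪ {b'_v,c'_v : v∈V∖X} (so |A*_X| = 2|V|−k), then the matching M_X consisting of all pairs {p,p'} with p ∈ A, p' ∈ A*_X and p' the copy of p is a stable matching in J_{A*_X}, and M_X ⊆ M. -/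
lemma mem_MX_iff {V : Type*} [Fintype V] [DecidableEq V] (X : Finset V) (x y : JAg V) :
    s(x, y) ∈ X.image (fun v => s(JAg.a v, JAg.a' v)) ∪
           (Finset.univ \ X).image (fun v => s(JAg.b v, JAg.b' v)) ∪
           (Finset.univ \ X).image (fun v => s(JAg.c v, JAg.c' v)) ↔
    (∃ v ∈ X, (x = JAg.a v ∧ y = JAg.a' v) ∨ (x = JAg.a' v ∧ y = JAg.a v)) ∨
    (∃ v, v ∉ X ∧ ((x = JAg.b v ∧ y = JAg.b' v) ∨ (x = JAg.b' v ∧ y = JAg.b v) ∨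
      (x = JAg.c v ∧ y = JAg.c' v) ∨ (x = JAg.c' v ∧ y = JAg.c v))) := by
  simp only [Finset.mem_union, Finset.mem_image, Finset.mem_sdiff, Finset.mem_univ, true_and,
    Sym2.eq_iff]
  aesop

lemma MX_unique {V : Type*} (X : Finset V) {u v w : JAg V}
    (h1 : (∃ t ∈ X, (u = JAg.a t ∧ v = JAg.a' t) ∨ (u = JAg.a' t ∧ v = JAg.a t)) ∨
      (∃ t, t ∉ X ∧ ((u = JAg.b t ∧ v = JAg.b' t) ∨ (u = JAg.b' t ∧ v = JAg.b t) ∨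
        (u = JAg.c t ∧ v = JAg.c' t) ∨ (u = JAg.c' t ∧ v = JAg.c t))))
    (h2 : (∃ t ∈ X, (u = JAg.a t ∧ w = JAg.a' t) ∨ (u = JAg.a' t ∧ w = JAg.a t)) ∨
      (∃ t, t ∉ X ∧ ((u = JAg.b t ∧ w = JAg.b' t) ∨ (u = JAg.b' t ∧ w = JAg.b t) ∨
        (u = JAg.c t ∧ w = JAg.c' t) ∨ (u = JAg.c' t ∧ w = JAg.c t)))) : v = w := by
  rcases h1 with ⟨t, ht, ⟨e1, e2⟩ | ⟨e1, e2⟩⟩ |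
      ⟨t, ht, ⟨e1, e2⟩ | ⟨e1, e2⟩ | ⟨e1, e2⟩ | ⟨e1, e2⟩⟩ <;>
    rcases h2 with ⟨t2, ht2, ⟨f1, f2⟩ | ⟨f1, f2⟩⟩ |
      ⟨t2, ht2, ⟨f1, f2⟩ | ⟨f1, f2⟩ | ⟨f1, f2⟩ | ⟨f1, f2⟩⟩ <;>
    subst e1 <;> subst e2 <;> subst f2 <;>
    first
      | (injection f1 with g; subst g; rfl)
      | injection f1
/-- If `X ⊆ V` is an independent set of size `k` in `G` and
`A*_X = {a'_v : v ∈ X} ∪ {b'_v, c'_v : v ∈ V ∖ X}` (so `|A*_X| = 2|V| − k`), then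
the matching `M_X` consisting of all pairs `{p, p'}` with `p ∈ A`, `p' ∈ A*_X` and
`p'` the copy of `p` is a stable matching in `J_{A*_X}`, and `M_X ⊆ M`. -/
theorem csr_addAg_MS_forward {V : Type*} [Fintype V] [DecidableEq V]
    (G : SimpleGraph V) (k : ℕ) (I : SR (JAg V)) (hI : IsCopyInstance G I)
    (X : Finset V) (hX : ∀ u ∈ X, ∀ v ∈ X, ¬ G.Adj u v) (hcard : X.card = k) :
    ∀ Astar : Set (JAg V),
      Astar = {x | ∃ v ∈ X, x = JAg.a' v} ∪
              {x | ∃ v : V, v ∉ X ∧ (x = JAg.b' v ∨ x = JAg.c' v)} →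
    ∀ MX : Finset (Sym2 (JAg V)),
      MX = X.image (fun v => s(JAg.a v, JAg.a' v)) ∪
           (Finset.univ \ X).image (fun v => s(JAg.b v, JAg.b' v)) ∪
           (Finset.univ \ X).image (fun v => s(JAg.c v, JAg.c' v)) →
      Astar.ncard = 2 * Fintype.card V - k ∧
      (I.induce (copyA ∪ Astar)).IsStable MX ∧
      MX ⊆ copyM V := by
  obtain ⟨hacc, hpa, hpab, hpa', hpb, hpc⟩ := hI
  intro Astar hA MX hM
  have hkle : k ≤ Fintype.card V := hcard ▸ X.card_le_univ
  have hmem : ∀ x y : JAg V, s(x, y) ∈ MX ↔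
      ((∃ v ∈ X, (x = JAg.a v ∧ y = JAg.a' v) ∨ (x = JAg.a' v ∧ y = JAg.a v)) ∨
      (∃ v, v ∉ X ∧ ((x = JAg.b v ∧ y = JAg.b' v) ∨ (x = JAg.b' v ∧ y = JAg.b v) ∨
        (x = JAg.c v ∧ y = JAg.c' v) ∨ (x = JAg.c' v ∧ y = JAg.c v)))) := by
    intro x y; rw [hM]; exact mem_MX_iff X x y
  have hTa : ∀ t, JAg.a t ∈ copyA ∪ Astar := fun t => Or.inl ⟨t, Or.inl rfl⟩
  have hTb : ∀ t, JAg.b t ∈ copyA ∪ Astar := fun t => Or.inl ⟨t, Or.inr (Or.inl rfl)⟩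
  have hTc : ∀ t, JAg.c t ∈ copyA ∪ Astar := fun t => Or.inl ⟨t, Or.inr (Or.inr rfl)⟩
  have hTa' : ∀ t, JAg.a' t ∈ copyA ∪ Astar ↔ t ∈ X := by
    intro t; rw [hA]; simp [copyA]
  have hTb' : ∀ t, JAg.b' t ∈ copyA ∪ Astar ↔ t ∉ X := by
    intro t; rw [hA]; simp [copyA]
  have hTc' : ∀ t, JAg.c' t ∈ copyA ∪ Astar ↔ t ∉ X := by
    intro t; rw [hA]; simp [copyA]
  refine ⟨?_, ⟨⟨?_, ?_⟩, ?_⟩, ?_⟩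
  · -- cardinality
    have hinja : Function.Injective (JAg.a' : V → JAg V) := fun a b h => by simpa using h
    have hinjb : Function.Injective (JAg.b' : V → JAg V) := fun a b h => by simpa using h
    have hinjc : Function.Injective (JAg.c' : V → JAg V) := fun a b h => by simpa using h
    have hAs : Astar = ↑(X.image (JAg.a' : V → JAg V) ∪ Xᶜ.image JAg.b' ∪ Xᶜ.image JAg.c') := by
      rw [hA]; ext x
      simp only [Set.mem_union, Set.mem_setOf_eq, Finset.coe_union, Finset.coe_image,
        Set.mem_image, Finset.mem_coe, Finset.mem_compl]
      aesop
    have d1 : Disjoint (X.image (JAg.a' : V → JAg V)) (Xᶜ.image JAg.b') := by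
      simp [Finset.disjoint_left]
    have d2 : Disjoint (X.image (JAg.a' : V → JAg V) ∪ Xᶜ.image JAg.b')
        (Xᶜ.image (JAg.c' : V → JAg V)) := by
      simp only [Finset.disjoint_left, Finset.mem_union, Finset.mem_image, Finset.mem_compl]
      aesop
    rw [hAs, Set.ncard_coe_finset, Finset.card_union_of_disjoint d2,
      Finset.card_union_of_disjoint d1,
      Finset.card_image_of_injective _ hinja, Finset.card_image_of_injective _ hinjb,
      Finset.card_image_of_injective _ hinjc, Finset.card_compl, hcard]
    omega
  · -- accept
    intro u v huv
    rcases (hmem u v).mp huv with ⟨t, ht, ⟨rfl, rfl⟩ | ⟨rfl, rfl⟩⟩ |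
      ⟨t, ht, ⟨rfl, rfl⟩ | ⟨rfl, rfl⟩ | ⟨rfl, rfl⟩ | ⟨rfl, rfl⟩⟩
    · exact ⟨(I.pref_acc (hpa t)).1, hTa t, (hTa' t).mpr ht⟩
    · exact ⟨I.symm (I.pref_acc (hpa t)).1, (hTa' t).mpr ht, hTa t⟩
    · exact ⟨(I.pref_acc (hpb t)).1, hTb t, (hTb' t).mpr ht⟩
    · exact ⟨I.symm (I.pref_acc (hpb t)).1, (hTb' t).mpr ht, hTb t⟩
    · exact ⟨(I.pref_acc (hpc t)).1, hTc t, (hTc' t).mpr ht⟩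
    · exact ⟨I.symm (I.pref_acc (hpc t)).1, (hTc' t).mpr ht, hTc t⟩
  · -- uniqueness
    intro u v w h1 h2
    exact MX_unique X ((hmem u v).mp h1) ((hmem u w).mp h2)
  · -- no blocking pair
    have key : ∀ u v : JAg V, copyBaseAcc G u v →
        u ∈ copyA ∪ Astar → v ∈ copyA ∪ Astar →
        (∀ w, s(u, w) ∈ MX → (I.induce (copyA ∪ Astar)).pref u v w) →
        (∀ w, s(v, w) ∈ MX → (I.induce (copyA ∪ Astar)).pref v u w) → False := by
      rintro u v (⟨t, rfl, rfl | rfl | rfl⟩ | ⟨s, t, hadj, rfl, rfl⟩ |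
          ⟨t, rfl, rfl⟩ | ⟨t, rfl, rfl⟩) hu hv hbu hbv
      · have ht : t ∈ X := (hTa' t).mp hv
        exact I.pref_irrefl _ _
          (hbu _ ((hmem _ _).mpr (Or.inl ⟨t, ht, Or.inl ⟨rfl, rfl⟩⟩))).1
      · by_cases ht : t ∈ X
        · have h1 := (hbu _ ((hmem _ _).mpr (Or.inl ⟨t, ht, Or.inl ⟨rfl, rfl⟩⟩))).1
          exact I.pref_irrefl _ _ (I.pref_trans h1 (hpa t))
        · have h1 := (hbv _ ((hmem _ _).mpr (Or.inr ⟨t, ht, Or.inl ⟨rfl, rfl⟩⟩))).1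
          exact I.pref_irrefl _ _ (I.pref_trans h1 (hpb t))
      · by_cases ht : t ∈ X
        · have h1 := (hbu _ ((hmem _ _).mpr (Or.inl ⟨t, ht, Or.inl ⟨rfl, rfl⟩⟩))).1
          exact I.pref_irrefl _ _ (I.pref_trans h1 (I.pref_trans (hpa t) (hpab t)))
        · have h1 := (hbv _ ((hmem _ _).mpr
            (Or.inr ⟨t, ht, Or.inr (Or.inr (Or.inl ⟨rfl, rfl⟩))⟩))).1
          exact I.pref_irrefl _ _ (I.pref_trans h1 (hpc t))
      · exact hX s ((hTa' s).mp hu) t ((hTa' t).mp hv) hadj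
      · have ht := (hTb' t).mp hv
        exact I.pref_irrefl _ _
          (hbu _ ((hmem _ _).mpr (Or.inr ⟨t, ht, Or.inl ⟨rfl, rfl⟩⟩))).1
      · have ht := (hTc' t).mp hv
        exact I.pref_irrefl _ _
          (hbu _ ((hmem _ _).mpr (Or.inr ⟨t, ht, Or.inr (Or.inr (Or.inl ⟨rfl, rfl⟩))⟩))).1
    rintro u v ⟨⟨huv, hu, hv⟩, hbu, hbv⟩
    rcases (hacc u v).mp huv with h | h
    · exact key u v h hu hv hbu hbv
    · exact key v u h hv hu hbv hbu
  · -- MX ⊆ copyM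
    rw [hM]
    exact Finset.union_subset_union (Finset.union_subset_union
      (Finset.image_subset_image (X.subset_univ))
      (Finset.image_subset_image (Finset.subset_univ _)))
      (Finset.image_subset_image (Finset.subset_univ _))
end

section
/- If A* ⊆ A' is such that the instance J_{A*} admits a stable matching M' with M' ⊆ M, then for every vertex v ∈ V, either a'_v ∈ A* or both b'_v ∈ A* and c'_v ∈ A*. -/
lemma mem_copyM_a {V : Type*} [Fintype V] [DecidableEq V] (v : V) (w : JAg V)
    (h : s(JAg.a v, w) ∈ copyM V) : w = JAg.a' v := by
  simp only [copyM, Finset.mem_union, Finset.mem_image, Finset.mem_univ, true_and] at h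
  rcases h with (⟨u, hu⟩ | ⟨u, hu⟩) | ⟨u, hu⟩ <;>
    rw [Sym2.eq_iff] at hu <;> rcases hu with ⟨h1, h2⟩ | ⟨h1, h2⟩ <;>
    first
      | (cases h1; exact h2.symm)
      | exact absurd h1 (by simp)
      | exact absurd h2 (by simp)

lemma mem_copyM_b {V : Type*} [Fintype V] [DecidableEq V] (v : V) (w : JAg V)
    (h : s(JAg.b v, w) ∈ copyM V) : w = JAg.b' v := by
  simp only [copyM, Finset.mem_union, Finset.mem_image, Finset.mem_univ, true_and] at h
  rcases h with (⟨u, hu⟩ | ⟨u, hu⟩) | ⟨u, hu⟩ <;>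
    rw [Sym2.eq_iff] at hu <;> rcases hu with ⟨h1, h2⟩ | ⟨h1, h2⟩ <;>
    first
      | (cases h1; exact h2.symm)
      | exact absurd h1 (by simp)
      | exact absurd h2 (by simp)

lemma mem_copyM_c {V : Type*} [Fintype V] [DecidableEq V] (v : V) (w : JAg V)
    (h : s(JAg.c v, w) ∈ copyM V) : w = JAg.c' v := by
  simp only [copyM, Finset.mem_union, Finset.mem_image, Finset.mem_univ, true_and] at h
  rcases h with (⟨u, hu⟩ | ⟨u, hu⟩) | ⟨u, hu⟩ <;>
    rw [Sym2.eq_iff] at hu <;> rcases hu with ⟨h1, h2⟩ | ⟨h1, h2⟩ <;>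
    first
      | (cases h1; exact h2.symm)
      | exact absurd h1 (by simp)
      | exact absurd h2 (by simp)

/-- If `A* ⊆ A'` is such that `J_{A*}` admits a stable matching
`M'` with `M' ⊆ M`, then for every vertex `v ∈ V`, either `a'_v ∈ A*` or both
`b'_v ∈ A*` and `c'_v ∈ A*`. -/
theorem csr_addAg_MS_cover {V : Type*} [Fintype V] [DecidableEq V]
    (G : SimpleGraph V) (I : SR (JAg V)) (hI : IsCopyInstance G I)
    (Astar : Set (JAg V)) (hA : Astar ⊆ copyA')
    (M' : Finset (Sym2 (JAg V))) (hsub : M' ⊆ copyM V)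
    (hstab : (I.induce (copyA ∪ Astar)).IsStable M') :
    ∀ v : V, JAg.a' v ∈ Astar ∨ (JAg.b' v ∈ Astar ∧ JAg.c' v ∈ Astar) := by
  intro v
  by_contra hcon
  push_neg at hcon
  obtain ⟨ha', hbc⟩ := hcon
  have haccA : JAg.a v ∈ copyA ∪ Astar := Or.inl ⟨v, Or.inl rfl⟩
  -- a_v is unmatched in M'
  have hauna : ∀ w, s(JAg.a v, w) ∈ M' → False := by
    intro w hw
    have hwv := mem_copyM_a v w (hsub hw)
    subst hwv
    have hacc := hstab.1.1 _ _ hw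
    rcases hacc.2.2 with hmem | hmem
    · obtain ⟨u, hu⟩ := hmem; rcases hu with h | h | h <;> simp at h
    · exact ha' hmem
  by_cases hb : JAg.b' v ∈ Astar
  · -- then c'_v ∉ Astar; blocking pair (a_v, c_v)
    have hc : JAg.c' v ∉ Astar := hbc hb
    refine hstab.2 (JAg.a v) (JAg.c v) ⟨⟨?_, haccA, Or.inl ⟨v, Or.inr (Or.inr rfl)⟩⟩, ?_, ?_⟩
    · exact (hI.1 _ _).2 (Or.inl (Or.inl ⟨v, rfl, Or.inr (Or.inr rfl)⟩))
    · intro w hw; exact absurd hw (fun hw => hauna w hw)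
    · intro w hw
      exfalso
      have hwv := mem_copyM_c v w (hsub hw)
      subst hwv
      have hacc := hstab.1.1 _ _ hw
      rcases hacc.2.2 with hmem | hmem
      · obtain ⟨u, hu⟩ := hmem; rcases hu with h | h | h <;> simp at h
      · exact hc hmem
  · -- b'_v ∉ Astar; blocking pair (a_v, b_v)
    refine hstab.2 (JAg.a v) (JAg.b v) ⟨⟨?_, haccA, Or.inl ⟨v, Or.inr (Or.inl rfl)⟩⟩, ?_, ?_⟩
    · exact (hI.1 _ _).2 (Or.inl (Or.inl ⟨v, rfl, Or.inr (Or.inl rfl)⟩))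
    · intro w hw; exact absurd hw (fun hw => hauna w hw)
    · intro w hw
      exfalso
      have hwv := mem_copyM_b v w (hsub hw)
      subst hwv
      have hacc := hstab.1.1 _ _ hw
      rcases hacc.2.2 with hmem | hmem
      · obtain ⟨u, hu⟩ := hmem; rcases hu with h | h | h <;> simp at h
      · exact hb hmem
end

section
/- G contains an independent set of size k if and only if there exists a set X ⊆ V with |X| ≤ k such that the instance K_X admits a stable matching. -/
/-! ## The selector construction `K(G, k)` -/

/-- Agents of the instance `K(G, k)`: the vertices of `G` (addable) and, for each
`i < k`, the original agents `s_i`, `a_i`, `b_i`.  (Agents `sel i`, `a i`, `b i`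
with `i ≥ k` are inactive: they accept nobody.) -/
inductive KAg (V : Type*) where
  | vtx : V → KAg V
  | sel : ℕ → KAg V
  | a : ℕ → KAg V
  | b : ℕ → KAg V
  deriving DecidableEq

/-- The acceptability lists of `K(G, k)`. -/
def selBaseAcc {V : Type*} (G : SimpleGraph V) (k : ℕ) (x y : KAg V) : Prop :=
  (∃ u v : V, G.Adj u v ∧ x = KAg.vtx u ∧ y = KAg.vtx v) ∨
  (∃ v : V, ∃ i < k, x = KAg.vtx v ∧ y = KAg.sel i) ∨
  (∃ i < k, x = KAg.sel i ∧ (y = KAg.a i ∨ y = KAg.b i)) ∨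
  (∃ i < k, x = KAg.a i ∧ y = KAg.b i)

/-- `I` is a realization of the instance `K(G, k)`: acceptability as prescribed, and
preferences respecting all comparisons forced by the construction (within each
unordered set the order is arbitrary; the selectors are ranked `s_1 ≻ ⋯ ≻ s_k`
by every vertex agent). -/
def IsSelInstance {V : Type*} (G : SimpleGraph V) (k : ℕ) (I : SR (KAg V)) : Prop :=
  (∀ x y, I.accept x y ↔ (selBaseAcc G k x y ∨ selBaseAcc G k y x)) ∧
  -- v: N(v) ≻ s_1 ≻ ⋯ ≻ s_k
  (∀ v u : V, G.Adj u v → ∀ i < k, I.pref (KAg.vtx v) (KAg.vtx u) (KAg.sel i)) ∧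
  (∀ v : V, ∀ i j : ℕ, i < j → j < k → I.pref (KAg.vtx v) (KAg.sel i) (KAg.sel j)) ∧
  -- s_i: V ≻ a_i ≻ b_i
  (∀ i < k, ∀ v : V, I.pref (KAg.sel i) (KAg.vtx v) (KAg.a i)) ∧
  (∀ i < k, I.pref (KAg.sel i) (KAg.a i) (KAg.b i)) ∧
  -- a_i: b_i ≻ s_i
  (∀ i < k, I.pref (KAg.a i) (KAg.b i) (KAg.sel i)) ∧
  -- b_i: s_i ≻ a_i
  (∀ i < k, I.pref (KAg.b i) (KAg.sel i) (KAg.a i))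

/-- The original agents `{s_i, a_i, b_i : i < k}` of `K(G, k)`. -/
def selOrig {V : Type*} (k : ℕ) : Set (KAg V) :=
  {x | ∃ i < k, x = KAg.sel i ∨ x = KAg.a i ∨ x = KAg.b i}

/-- The agent set of the sub-instance `K_X`. -/
def selAgents {V : Type*} (k : ℕ) (X : Set V) : Set (KAg V) :=
  selOrig k ∪ {x | ∃ v ∈ X, x = KAg.vtx v}

section Helpers

open KAg

lemma SR.pref_asymm_s11 {α : Type*} (I : SR α) {u x y : α} (h : I.pref u x y) :
    ¬ I.pref u y x := fun h' => I.pref_irrefl u x (I.pref_trans h h')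

lemma exists_max_rel {β : Type*} (r : β → β → Prop)
    (htr : ∀ {x y z}, r x y → r y z → r x z)
    (htot : ∀ x y, x ≠ y → r x y ∨ r y x)
    (s : Finset β) (hs : s.Nonempty) :
    ∃ m, m ∈ s ∧ ∀ x ∈ s, x ≠ m → r m x := by
  classical
  induction s using Finset.cons_induction with
  | empty => exact absurd hs (by simp)
  | cons a s ha ih =>
    rcases s.eq_empty_or_nonempty with rfl | hs'
    · exact ⟨a, by simp, by simp⟩
    · obtain ⟨m, hm, hmax⟩ := ih hs'
      have ham : a ≠ m := fun h => ha (h ▸ hm)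
      rcases htot a m ham with h | h
      · refine ⟨a, Finset.mem_cons_self _ _, ?_⟩
        intro x hx hxa
        rcases Finset.mem_cons.1 hx with rfl | hx
        · exact absurd rfl hxa
        · by_cases hxm : x = m
          · exact hxm ▸ h
          · exact htr h (hmax x hx hxm)
      · refine ⟨m, Finset.mem_cons.2 (Or.inr hm), ?_⟩
        intro x hx hxm
        rcases Finset.mem_cons.1 hx with rfl | hx
        · exact h
        · exact hmax x hx hxm

noncomputable def greedyRem {V : Type*} [DecidableEq V]
    (pick : ℕ → Finset V → V) (X : Finset V) : ℕ → Finset V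
  | 0 => X
  | n + 1 => (greedyRem pick X n).erase (pick n (greedyRem pick X n))

variable {V : Type*} {G : SimpleGraph V} {k : ℕ} {I : SR (KAg V)}

section AccLemmas

variable (hI : IsSelInstance G k I)
include hI

lemma acc_vtx_sel {v : V} {i : ℕ} (hi : i < k) : I.accept (vtx v) (sel i) :=
  (hI.1 _ _).2 (Or.inl (Or.inr (Or.inl ⟨v, i, hi, rfl, rfl⟩)))

lemma acc_sel_a {i : ℕ} (hi : i < k) : I.accept (sel i) (a i) :=
  (hI.1 _ _).2 (Or.inl (Or.inr (Or.inr (Or.inl ⟨i, hi, rfl, Or.inl rfl⟩))))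

lemma acc_sel_b {i : ℕ} (hi : i < k) : I.accept (sel i) (b i) :=
  (hI.1 _ _).2 (Or.inl (Or.inr (Or.inr (Or.inl ⟨i, hi, rfl, Or.inr rfl⟩))))

lemma acc_a_b {i : ℕ} (hi : i < k) : I.accept (a i) (b i) :=
  (hI.1 _ _).2 (Or.inl (Or.inr (Or.inr (Or.inr ⟨i, hi, rfl, rfl⟩))))

lemma acc_vtx_vtx {u v : V} (h : G.Adj u v) : I.accept (vtx u) (vtx v) :=
  (hI.1 _ _).2 (Or.inl (Or.inl ⟨u, v, h, rfl, rfl⟩))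

lemma acc_a_elim {i : ℕ} {w : KAg V} (h : I.accept (a i) w) :
    i < k ∧ (w = b i ∨ w = sel i) := by
  rcases (hI.1 _ _).1 h with h | h <;>
    rcases h with ⟨u, v, _, hx, hy⟩ | ⟨v, j, hj, hx, hy⟩ | ⟨j, hj, hx, hy⟩ | ⟨j, hj, hx, hy⟩ <;>
    simp_all

lemma acc_b_elim {i : ℕ} {w : KAg V} (h : I.accept (b i) w) :
    i < k ∧ (w = sel i ∨ w = a i) := by
  rcases (hI.1 _ _).1 h with h | h <;>
    rcases h with ⟨u, v, _, hx, hy⟩ | ⟨v, j, hj, hx, hy⟩ | ⟨j, hj, hx, hy⟩ | ⟨j, hj, hx, hy⟩ <;>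
    simp_all

lemma acc_sel_elim {i : ℕ} {w : KAg V} (h : I.accept (sel i) w) :
    i < k ∧ ((∃ v : V, w = vtx v) ∨ w = a i ∨ w = b i) := by
  rcases (hI.1 _ _).1 h with h | h <;>
    rcases h with ⟨u, v, _, hx, hy⟩ | ⟨v, j, hj, hx, hy⟩ | ⟨j, hj, hx, hy⟩ | ⟨j, hj, hx, hy⟩ <;>
    simp_all

lemma acc_vtx_elim {v : V} {w : KAg V} (h : I.accept (vtx v) w) :
    (∃ u : V, G.Adj v u ∧ w = vtx u) ∨ ∃ i, i < k ∧ w = sel i := by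
  rcases (hI.1 _ _).1 h with h | h <;>
    rcases h with ⟨u', v', hadj, hx, hy⟩ | ⟨v', j, hj, hx, hy⟩ | ⟨j, hj, hx, hy⟩ | ⟨j, hj, hx, hy⟩ <;>
    simp_all
  exact hadj.symm

end AccLemmas

lemma mem_sel_selAgents {X : Set V} {i : ℕ} (hi : i < k) :
    (sel i : KAg V) ∈ selAgents k X := Or.inl ⟨i, hi, Or.inl rfl⟩

lemma mem_a_selAgents {X : Set V} {i : ℕ} (hi : i < k) :
    (a i : KAg V) ∈ selAgents k X := Or.inl ⟨i, hi, Or.inr (Or.inl rfl)⟩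

lemma mem_b_selAgents {X : Set V} {i : ℕ} (hi : i < k) :
    (b i : KAg V) ∈ selAgents k X := Or.inl ⟨i, hi, Or.inr (Or.inr rfl)⟩

lemma mem_vtx_selAgents {X : Set V} {v : V} :
    (vtx v : KAg V) ∈ selAgents k X ↔ v ∈ X := by
  simp [selAgents, selOrig]

end Helpers

lemma selector_backward {V : Type*} [Fintype V] [DecidableEq V]
    (G : SimpleGraph V) (k : ℕ)
    (I : SR (KAg V)) (hI : IsSelInstance G k I)
    (X : Set V) (M : Finset (Sym2 (KAg V)))
    (hS : (I.induce (selAgents k X)).IsStable M) :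
    ∃ F : Finset V, F.card = k ∧ ∀ u ∈ F, ∀ v ∈ F, ¬ G.Adj u v := by
  classical
  obtain ⟨⟨hM1, hM2⟩, hstab⟩ := hS
  -- every selector is matched to a vertex of X
  have key : ∀ i, i < k → ∃ v : V, v ∈ X ∧ s(KAg.sel i, KAg.vtx v) ∈ M := by
    intro i hi
    by_cases hsel : ∃ w, s(KAg.sel i, w) ∈ M
    · obtain ⟨w, hw⟩ := hsel
      have hacc := hM1 _ _ hw
      obtain ⟨hacc0, _, hwT⟩ := hacc
      rcases (acc_sel_elim hI hacc0).2 with ⟨v, rfl⟩ | rfl | rfl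
      · exact ⟨v, (mem_vtx_selAgents).1 hwT, hw⟩
      · -- sel i matched to a i: {a i, b i} blocks
        exfalso
        refine hstab (KAg.a i) (KAg.b i)
          ⟨⟨acc_a_b hI hi, mem_a_selAgents hi, mem_b_selAgents hi⟩, ?_, ?_⟩
        · intro w hw'
          have hw2 : s(KAg.a i, KAg.sel i) ∈ M := by rwa [Sym2.eq_swap]
          have : w = KAg.sel i := hM2 _ _ _ hw' hw2
          subst this
          exact ⟨hI.2.2.2.2.2.1 i hi, mem_a_selAgents hi, mem_b_selAgents hi,
            mem_sel_selAgents hi⟩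
        · intro w hw'
          exfalso
          have hacc' := hM1 _ _ hw'
          rcases (acc_b_elim hI hacc'.1).2 with rfl | rfl
          · have h3 : s(KAg.sel i, KAg.b i) ∈ M := by rwa [Sym2.eq_swap] at hw'
            exact absurd (hM2 _ _ _ hw h3) (by simp)
          · have h3 : s(KAg.a i, KAg.b i) ∈ M := by rwa [Sym2.eq_swap] at hw'
            have h2 : s(KAg.a i, KAg.sel i) ∈ M := by rwa [Sym2.eq_swap] at hw
            exact absurd (hM2 _ _ _ h3 h2) (by simp)
      · -- sel i matched to b i : {sel i, a i} blocks
        exfalso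
        refine hstab (KAg.sel i) (KAg.a i)
          ⟨⟨acc_sel_a hI hi, mem_sel_selAgents hi, mem_a_selAgents hi⟩, ?_, ?_⟩
        · intro w hw'
          have : w = KAg.b i := hM2 _ _ _ hw' hw
          subst this
          exact ⟨hI.2.2.2.2.1 i hi, mem_sel_selAgents hi, mem_a_selAgents hi,
            mem_b_selAgents hi⟩
        · intro w hw'
          exfalso
          have hacc' := hM1 _ _ hw'
          rcases (acc_a_elim hI hacc'.1).2 with rfl | rfl
          · have h2 : s(KAg.b i, KAg.a i) ∈ M := by rwa [Sym2.eq_swap] at hw'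
            have h3 : s(KAg.b i, KAg.sel i) ∈ M := by rwa [Sym2.eq_swap] at hw
            exact absurd (hM2 _ _ _ h2 h3) (by simp)
          · have h2 : s(KAg.sel i, KAg.a i) ∈ M := by rwa [Sym2.eq_swap] at hw'
            exact absurd (hM2 _ _ _ h2 hw) (by simp)
    · -- sel i unmatched
      exfalso
      by_cases hab : s(KAg.a i, KAg.b i) ∈ M
      · -- {sel i, b i} blocks
        refine hstab (KAg.sel i) (KAg.b i)
          ⟨⟨acc_sel_b hI hi, mem_sel_selAgents hi, mem_b_selAgents hi⟩, ?_, ?_⟩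
        · intro w hw'; exact absurd ⟨w, hw'⟩ hsel
        · intro w hw'
          have h2 : s(KAg.b i, KAg.a i) ∈ M := by rwa [Sym2.eq_swap] at hab
          have : w = KAg.a i := hM2 _ _ _ hw' h2
          subst this
          exact ⟨hI.2.2.2.2.2.2 i hi, mem_b_selAgents hi, mem_sel_selAgents hi,
            mem_a_selAgents hi⟩
      · -- {sel i, a i} blocks
        refine hstab (KAg.sel i) (KAg.a i)
          ⟨⟨acc_sel_a hI hi, mem_sel_selAgents hi, mem_a_selAgents hi⟩, ?_, ?_⟩
        · intro w hw'; exact absurd ⟨w, hw'⟩ hsel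
        · intro w hw'
          exfalso
          have hacc' := hM1 _ _ hw'
          rcases (acc_a_elim hI hacc'.1).2 with rfl | rfl
          · exact hab hw'
          · exact hsel ⟨KAg.a i, by rwa [Sym2.eq_swap] at hw'⟩
  have key' : ∀ i : Fin k, ∃ v : V, v ∈ X ∧ s(KAg.sel i.1, KAg.vtx v) ∈ M :=
    fun i => key i.1 i.2
  choose f hf1 hf2 using key'
  have hfinj : Function.Injective f := by
    intro i j hij
    have h1 : s(KAg.vtx (f i), KAg.sel i.1) ∈ M := by rw [Sym2.eq_swap]; exact hf2 i
    have h2 : s(KAg.vtx (f i), KAg.sel j.1) ∈ M := by rw [Sym2.eq_swap, hij]; exact hf2 j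
    have := hM2 _ _ _ h1 h2
    exact Fin.ext (by injection this)
  refine ⟨Finset.univ.image f, ?_, ?_⟩
  · rw [Finset.card_image_of_injective _ hfinj, Finset.card_univ, Fintype.card_fin]
  · intro u hu v hv hadj
    simp only [Finset.mem_image, Finset.mem_univ, true_and] at hu hv
    obtain ⟨i, rfl⟩ := hu
    obtain ⟨j, rfl⟩ := hv
    refine hstab (KAg.vtx (f i)) (KAg.vtx (f j))
      ⟨⟨acc_vtx_vtx hI hadj, mem_vtx_selAgents.2 (hf1 i), mem_vtx_selAgents.2 (hf1 j)⟩, ?_, ?_⟩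
    · intro w hw'
      have h1 : s(KAg.vtx (f i), KAg.sel i.1) ∈ M := by rw [Sym2.eq_swap]; exact hf2 i
      have : w = KAg.sel i.1 := hM2 _ _ _ hw' h1
      subst this
      exact ⟨hI.2.1 (f i) (f j) hadj.symm i.1 i.2, mem_vtx_selAgents.2 (hf1 i),
        mem_vtx_selAgents.2 (hf1 j), mem_sel_selAgents i.2⟩
    · intro w hw'
      have h1 : s(KAg.vtx (f j), KAg.sel j.1) ∈ M := by rw [Sym2.eq_swap]; exact hf2 j
      have : w = KAg.sel j.1 := hM2 _ _ _ hw' h1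
      subst this
      exact ⟨hI.2.1 (f j) (f i) hadj j.1 j.2, mem_vtx_selAgents.2 (hf1 j),
        mem_vtx_selAgents.2 (hf1 i), mem_sel_selAgents j.2⟩

lemma selector_forward {V : Type*} [Fintype V] [DecidableEq V]
    (G : SimpleGraph V) (k : ℕ) (hk : 0 < k)
    (I : SR (KAg V)) (hI : IsSelInstance G k I)
    (X : Finset V) (hXcard : X.card = k) (hind : ∀ u ∈ X, ∀ v ∈ X, ¬ G.Adj u v) :
    ∃ M : Finset (Sym2 (KAg V)), (I.induce (selAgents k (↑X : Set V))).IsStable M := by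
  classical
  have hXne : X.Nonempty := Finset.card_pos.1 (hXcard ▸ hk)
  obtain ⟨v0, hv0⟩ := hXne
  have hrtot : ∀ i, i < k → ∀ x y : V, x ≠ y →
      I.pref (KAg.sel i) (KAg.vtx x) (KAg.vtx y) ∨
      I.pref (KAg.sel i) (KAg.vtx y) (KAg.vtx x) := by
    intro i hi x y hne
    exact I.pref_total (I.symm (acc_vtx_sel hI hi)) (I.symm (acc_vtx_sel hI hi))
      (by simp [hne])
  let pick : ℕ → Finset V → V := fun i s =>
    if h : s.Nonempty ∧ i < k then
      (exists_max_rel (fun u v => I.pref (KAg.sel i) (KAg.vtx u) (KAg.vtx v))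
        (fun h1 h2 => I.pref_trans h1 h2) (hrtot i h.2) s h.1).choose
    else v0
  let rem : ℕ → Finset V := greedyRem pick X
  let g : ℕ → V := fun i => pick i (rem i)
  have hrem_zero : rem 0 = X := rfl
  have hrem_succ : ∀ n, rem (n + 1) = (rem n).erase (g n) := fun n => rfl
  have hpick_spec : ∀ i, i < k → (rem i).Nonempty →
      g i ∈ rem i ∧ ∀ x ∈ rem i, x ≠ g i →
        I.pref (KAg.sel i) (KAg.vtx (g i)) (KAg.vtx x) := by
    intro i hi hne
    have h : (rem i).Nonempty ∧ i < k := ⟨hne, hi⟩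
    have e : g i = (exists_max_rel (fun u v => I.pref (KAg.sel i) (KAg.vtx u) (KAg.vtx v))
        (fun h1 h2 => I.pref_trans h1 h2) (hrtot i h.2) (rem i) h.1).choose := dif_pos h
    rw [e]
    exact (exists_max_rel (fun u v => I.pref (KAg.sel i) (KAg.vtx u) (KAg.vtx v))
      (fun h1 h2 => I.pref_trans h1 h2) (hrtot i h.2) (rem i) h.1).choose_spec
  have hcard : ∀ n, n ≤ k → (rem n).card = k - n := by
    intro n
    induction n with
    | zero => intro _; rw [hrem_zero, hXcard]; omega
    | succ n ih =>
      intro hnk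
      have hnk' : n < k := hnk
      have hne : (rem n).Nonempty := by
        rw [← Finset.card_pos, ih (le_of_lt hnk')]; omega
      have hg := (hpick_spec n hnk' hne).1
      rw [hrem_succ n, Finset.card_erase_of_mem hg, ih (le_of_lt hnk')]
      omega
  have hrem_ne : ∀ n, n < k → (rem n).Nonempty := by
    intro n hn
    rw [← Finset.card_pos, hcard n (le_of_lt hn)]; omega
  have hg_mem : ∀ n, n < k → g n ∈ rem n := fun n hn => (hpick_spec n hn (hrem_ne n hn)).1
  have hg_max : ∀ n, n < k → ∀ x ∈ rem n, x ≠ g n →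
      I.pref (KAg.sel n) (KAg.vtx (g n)) (KAg.vtx x) :=
    fun n hn => (hpick_spec n hn (hrem_ne n hn)).2
  have hsub : ∀ n, rem (n + 1) ⊆ rem n := by
    intro n; rw [hrem_succ]; exact Finset.erase_subset _ _
  have hrem_mono : ∀ m n, m ≤ n → rem n ⊆ rem m := by
    intro m n h
    induction n with
    | zero => obtain rfl := Nat.le_zero.1 h; exact subset_rfl
    | succ n ih =>
      rcases Nat.lt_or_ge m (n + 1) with hm | hm
      · exact (hsub n).trans (ih (Nat.lt_succ_iff.1 hm))
      · obtain rfl : m = n + 1 := le_antisymm h hm; exact subset_rfl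
  have hgX : ∀ n, n < k → g n ∈ X := fun n hn => hrem_mono 0 n (Nat.zero_le n) (hg_mem n hn)
  have hg_sep : ∀ i j, i < j → j < k → g j ∈ rem i ∧ g j ≠ g i := by
    intro i j hij hjk
    have h1 : g j ∈ rem (i + 1) := hrem_mono (i + 1) j hij (hg_mem j hjk)
    rw [hrem_succ i] at h1
    exact ⟨Finset.mem_of_mem_erase h1, (Finset.mem_erase.1 h1).1⟩
  have hginj : ∀ i j, i < k → j < k → g i = g j → i = j := by
    intro i j hi hj hgij
    by_contra hne
    rcases Nat.lt_or_ge i j with h | h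
    · exact (hg_sep i j h hj).2 hgij.symm
    · have hji : j < i := lt_of_le_of_ne h (fun e => hne e.symm)
      exact (hg_sep j i hji hi).2 hgij
  have hsurj : ∀ v ∈ X, ∃ i, i < k ∧ v = g i := by
    intro v hv
    have hvk : v ∉ rem k := by
      have hc : (rem k).card = 0 := by rw [hcard k le_rfl]; omega
      rw [Finset.card_eq_zero] at hc; simp [hc]
    have hstep : ∀ n, v ∉ rem n → ∃ i, i < n ∧ v ∈ rem i ∧ v ∉ rem (i + 1) := by
      intro n
      induction n with
      | zero => intro h; exact absurd (hrem_zero ▸ hv : v ∈ rem 0) h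
      | succ n ih =>
        intro h
        by_cases hn : v ∈ rem n
        · exact ⟨n, Nat.lt_succ_self n, hn, h⟩
        · obtain ⟨i, hi, h1, h2⟩ := ih hn
          exact ⟨i, Nat.lt_succ_of_lt hi, h1, h2⟩
    obtain ⟨i, hik, h1, h2⟩ := hstep k hvk
    refine ⟨i, hik, ?_⟩
    rw [hrem_succ i, Finset.mem_erase] at h2
    push_neg at h2
    by_contra hne
    exact (h2 hne) h1
  -- the matching
  set M : Finset (Sym2 (KAg V)) :=
    ((Finset.range k).image fun i => s(KAg.vtx (g i), KAg.sel i)) ∪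
    ((Finset.range k).image fun i => s(KAg.a i, KAg.b i)) with hM
  have hmem : ∀ u w : KAg V, s(u, w) ∈ M ↔ ∃ i, i < k ∧
      ((u = KAg.vtx (g i) ∧ w = KAg.sel i) ∨ (u = KAg.sel i ∧ w = KAg.vtx (g i)) ∨
       (u = KAg.a i ∧ w = KAg.b i) ∨ (u = KAg.b i ∧ w = KAg.a i)) := by
    intro u w
    rw [hM]
    simp only [Finset.mem_union, Finset.mem_image, Finset.mem_range, Sym2.eq_iff]
    constructor
    · rintro (⟨i, hi, (⟨h1, h2⟩ | ⟨h1, h2⟩)⟩ | ⟨i, hi, (⟨h1, h2⟩ | ⟨h1, h2⟩)⟩)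
      · exact ⟨i, hi, Or.inl ⟨h1.symm, h2.symm⟩⟩
      · exact ⟨i, hi, Or.inr (Or.inl ⟨h2.symm, h1.symm⟩)⟩
      · exact ⟨i, hi, Or.inr (Or.inr (Or.inl ⟨h1.symm, h2.symm⟩))⟩
      · exact ⟨i, hi, Or.inr (Or.inr (Or.inr ⟨h2.symm, h1.symm⟩))⟩
    · rintro ⟨i, hi, (⟨rfl, rfl⟩ | ⟨rfl, rfl⟩ | ⟨rfl, rfl⟩ | ⟨rfl, rfl⟩)⟩
      · exact Or.inl ⟨i, hi, Or.inl ⟨rfl, rfl⟩⟩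
      · exact Or.inl ⟨i, hi, Or.inr ⟨rfl, rfl⟩⟩
      · exact Or.inr ⟨i, hi, Or.inl ⟨rfl, rfl⟩⟩
      · exact Or.inr ⟨i, hi, Or.inr ⟨rfl, rfl⟩⟩
  refine ⟨M, ⟨?_, ?_⟩, ?_⟩
  · -- acceptable pairs
    intro u v h
    rw [hmem] at h
    obtain ⟨i, hi, h⟩ := h
    rcases h with ⟨rfl, rfl⟩ | ⟨rfl, rfl⟩ | ⟨rfl, rfl⟩ | ⟨rfl, rfl⟩
    · exact ⟨acc_vtx_sel hI hi, mem_vtx_selAgents.2 (Finset.mem_coe.2 (hgX i hi)),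
        mem_sel_selAgents hi⟩
    · exact ⟨I.symm (acc_vtx_sel hI hi), mem_sel_selAgents hi,
        mem_vtx_selAgents.2 (Finset.mem_coe.2 (hgX i hi))⟩
    · exact ⟨acc_a_b hI hi, mem_a_selAgents hi, mem_b_selAgents hi⟩
    · exact ⟨I.symm (acc_a_b hI hi), mem_b_selAgents hi, mem_a_selAgents hi⟩
  · -- at most one partner
    intro u v w h1 h2
    rw [hmem] at h1 h2
    obtain ⟨i, hi, c1⟩ := h1
    obtain ⟨j, hj, c2⟩ := h2
    rcases c1 with ⟨rfl, rfl⟩ | ⟨rfl, rfl⟩ | ⟨rfl, rfl⟩ | ⟨rfl, rfl⟩ <;>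
      rcases c2 with ⟨h, rfl⟩ | ⟨h, rfl⟩ | ⟨h, rfl⟩ | ⟨h, rfl⟩ <;>
      first
        | exact congrArg KAg.sel (hginj i j hi hj (KAg.vtx.inj h))
        | exact congrArg (fun t => KAg.vtx (g t)) (KAg.sel.inj h)
        | exact congrArg KAg.b (KAg.a.inj h)
        | exact congrArg KAg.a (KAg.b.inj h)
        | exact absurd h (by simp)
  · -- stability
    intro u v hb
    obtain ⟨hJacc, hu, hv⟩ := hb
    obtain ⟨hacc0, huT, hvT⟩ := hJacc
    have hblockVS : ∀ (x : V) (i : ℕ), i < k → x ∈ X →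
        (∀ w, s(KAg.vtx x, w) ∈ M →
          (I.induce (selAgents k (↑X : Set V))).pref (KAg.vtx x) (KAg.sel i) w) →
        (∀ w, s(KAg.sel i, w) ∈ M →
          (I.induce (selAgents k (↑X : Set V))).pref (KAg.sel i) (KAg.vtx x) w) → False := by
      intro x i hik hxX hu' hv'
      obtain ⟨j, hjk, rfl⟩ := hsurj x hxX
      have hM1' : s(KAg.vtx (g j), KAg.sel j) ∈ M := (hmem _ _).2 ⟨j, hjk, Or.inl ⟨rfl, rfl⟩⟩
      have hp1 := (hu' _ hM1').1
      have hij : i < j := by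
        rcases Nat.lt_trichotomy i j with h | rfl | h
        · exact h
        · exact absurd hp1 (I.pref_irrefl _ _)
        · exact absurd hp1 (I.pref_asymm_s11 (hI.2.2.1 (g j) j i h hik))
      have hM2' : s(KAg.sel i, KAg.vtx (g i)) ∈ M :=
        (hmem _ _).2 ⟨i, hik, Or.inr (Or.inl ⟨rfl, rfl⟩)⟩
      have hp2 := (hv' _ hM2').1
      have hsep := hg_sep i j hij hjk
      exact I.pref_asymm_s11 (hg_max i hik (g j) hsep.1 hsep.2) hp2
    rcases u with x | i | i | i
    · have hxX : x ∈ X := Finset.mem_coe.1 (mem_vtx_selAgents.1 huT)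
      rcases acc_vtx_elim hI hacc0 with ⟨y, hadj, rfl⟩ | ⟨i, hik, rfl⟩
      · have hyX : y ∈ X := Finset.mem_coe.1 (mem_vtx_selAgents.1 hvT)
        exact hind x hxX y hyX hadj
      · exact hblockVS x i hik hxX hu hv
    · obtain ⟨hik, hshape⟩ := acc_sel_elim hI hacc0
      rcases hshape with ⟨y, rfl⟩ | rfl | rfl
      · have hyX : y ∈ X := Finset.mem_coe.1 (mem_vtx_selAgents.1 hvT)
        exact hblockVS y i hik hyX hv hu
      · have hM' : s(KAg.sel i, KAg.vtx (g i)) ∈ M :=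
          (hmem _ _).2 ⟨i, hik, Or.inr (Or.inl ⟨rfl, rfl⟩)⟩
        exact I.pref_asymm_s11 (hI.2.2.2.1 i hik (g i)) (hu _ hM').1
      · have hM' : s(KAg.sel i, KAg.vtx (g i)) ∈ M :=
          (hmem _ _).2 ⟨i, hik, Or.inr (Or.inl ⟨rfl, rfl⟩)⟩
        have htr : I.pref (KAg.sel i) (KAg.vtx (g i)) (KAg.b i) :=
          I.pref_trans (hI.2.2.2.1 i hik (g i)) (hI.2.2.2.2.1 i hik)
        exact I.pref_asymm_s11 htr (hu _ hM').1
    · obtain ⟨hik, hshape⟩ := acc_a_elim hI hacc0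
      rcases hshape with rfl | rfl
      · have hM' : s(KAg.a i, KAg.b i) ∈ M :=
          (hmem _ _).2 ⟨i, hik, Or.inr (Or.inr (Or.inl ⟨rfl, rfl⟩))⟩
        exact I.pref_irrefl _ _ (hu _ hM').1
      · have hM' : s(KAg.sel i, KAg.vtx (g i)) ∈ M :=
          (hmem _ _).2 ⟨i, hik, Or.inr (Or.inl ⟨rfl, rfl⟩)⟩
        exact I.pref_asymm_s11 (hI.2.2.2.1 i hik (g i)) (hv _ hM').1
    · obtain ⟨hik, hshape⟩ := acc_b_elim hI hacc0
      rcases hshape with rfl | rfl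
      · have hM' : s(KAg.sel i, KAg.vtx (g i)) ∈ M :=
          (hmem _ _).2 ⟨i, hik, Or.inr (Or.inl ⟨rfl, rfl⟩)⟩
        have htr : I.pref (KAg.sel i) (KAg.vtx (g i)) (KAg.b i) :=
          I.pref_trans (hI.2.2.2.1 i hik (g i)) (hI.2.2.2.2.1 i hik)
        exact I.pref_asymm_s11 htr (hv _ hM').1
      · have hM' : s(KAg.a i, KAg.b i) ∈ M :=
          (hmem _ _).2 ⟨i, hik, Or.inr (Or.inr (Or.inl ⟨rfl, rfl⟩))⟩
        exact I.pref_irrefl _ _ (hv _ hM').1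

/-- `G` contains an independent set of size `k` iff there exists
`X ⊆ V` with `|X| ≤ k` such that the instance `K_X` admits a stable matching. -/
theorem csr_addAg_existsSM_iff {V : Type*} [Fintype V] [DecidableEq V]
    (G : SimpleGraph V) (k : ℕ) (hk : 0 < k)
    (I : SR (KAg V)) (hI : IsSelInstance G k I) :
    (∃ X : Finset V, X.card = k ∧ ∀ u ∈ X, ∀ v ∈ X, ¬ G.Adj u v) ↔
    (∃ X : Set V, X.ncard ≤ k ∧
      ∃ M : Finset (Sym2 (KAg V)), (I.induce (selAgents k X)).IsStable M) := by
  constructor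
  · rintro ⟨X, hXcard, hind⟩
    obtain ⟨M, hM⟩ := selector_forward G k hk I hI X hXcard hind
    exact ⟨(↑X : Set V), by rw [Set.ncard_coe_finset, hXcard], M, hM⟩
  · rintro ⟨X, _, M, hM⟩
    exact selector_backward G k I hI X M hM
end

section
/- If X ⊆ V is an independent set of size k in G, then the instance K_X admits a stable matching that covers all of its agents (a perfect stable matching). -/
/-- In a finite nonempty set, a transitive total relation has a best element. -/
lemma sr_exists_best {β : Type*} (r : β → β → Prop)
    (htrans : ∀ x y z, r x y → r y z → r x z) (S : Finset β) :
    S.Nonempty → (∀ x ∈ S, ∀ y ∈ S, x ≠ y → r x y ∨ r y x) →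
    ∃ m ∈ S, ∀ y ∈ S, y ≠ m → r m y := by
  classical
  induction S using Finset.induction_on with
  | empty => intro h; simp at h
  | @insert a s ha ih =>
    intro _ htot
    rcases s.eq_empty_or_nonempty with rfl | hs
    · exact ⟨a, by simp, by simp⟩
    · obtain ⟨m, hm, hbest⟩ := ih hs
        (fun x hx y hy => htot x (Finset.mem_insert_of_mem hx) y (Finset.mem_insert_of_mem hy))
      by_cases hma : r m a
      · refine ⟨m, Finset.mem_insert_of_mem hm, ?_⟩
        intro y hy hne
        rcases Finset.mem_insert.1 hy with rfl | hy'
        · exact hma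
        · exact hbest y hy' hne
      · have hne : a ≠ m := fun h => ha (h ▸ hm)
        have ham : r a m :=
          (htot a (Finset.mem_insert_self a s) m (Finset.mem_insert_of_mem hm) hne).resolve_right hma
        refine ⟨a, Finset.mem_insert_self a s, ?_⟩
        intro y hy hyne
        rcases Finset.mem_insert.1 hy with rfl | hy'
        · exact absurd rfl hyne
        · by_cases hym : y = m
          · exact hym ▸ ham
          · exact htrans _ _ _ ham (hbest y hy' hym)

/-- Greedy serial-dictatorship enumeration. -/
lemma sr_greedy {β : Type*} [Nonempty β] [DecidableEq β] (r : ℕ → β → β → Prop)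
    (htrans : ∀ t x y z, r t x y → r t y z → r t x z)
    (htot : ∀ t, ∀ x y : β, x ≠ y → r t x y ∨ r t y x) :
    ∀ n (S : Finset β), S.card = n → ∀ m, ∃ f : ℕ → β,
      (∀ i < n, f i ∈ S) ∧ (∀ i j, i < j → j < n → r (m + i) (f i) (f j)) := by
  intro n
  induction n with
  | zero =>
    intro S _ m
    exact ⟨fun _ => Classical.arbitrary β, fun i hi => absurd hi (by omega),
      fun i j _ hj => absurd hj (by omega)⟩
  | succ n ih =>
    intro S hS m
    have hSne : S.Nonempty := Finset.card_pos.1 (by omega)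
    obtain ⟨b, hb, hbest⟩ := sr_exists_best (r m) (htrans m) S hSne (fun x _ y _ => htot m x y)
    obtain ⟨g, hg1, hg2⟩ := ih (S.erase b) (by rw [Finset.card_erase_of_mem hb, hS]; rfl) (m + 1)
    refine ⟨fun i => if i = 0 then b else g (i - 1), ?_, ?_⟩
    · intro i hi
      by_cases h0 : i = 0
      · simpa [h0] using hb
      · simp only [if_neg h0]
        exact Finset.mem_of_mem_erase (hg1 (i - 1) (by omega))
    · intro i j hij hj
      have hj0 : j ≠ 0 := by omega
      by_cases h0 : i = 0
      · have hmem := hg1 (j - 1) (by omega)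
        have hjne : g (j - 1) ≠ b := Finset.ne_of_mem_erase hmem
        simp only [h0, if_pos rfl, if_neg hj0, Nat.add_zero]
        exact hbest _ (Finset.mem_of_mem_erase hmem) hjne
      · have h2 := hg2 (i - 1) (j - 1) (by omega) (by omega)
        have heq : m + 1 + (i - 1) = m + i := by omega
        simp only [if_neg h0, if_neg hj0]
        exact heq ▸ h2

set_option maxHeartbeats 2000000 in
/-- If `X ⊆ V` is an independent set of size `k` in `G`, then the
instance `K_X` admits a stable matching covering all of its agents (a perfect
stable matching). -/
theorem csr_addAg_existsSM_forward {V : Type*} [Fintype V] [DecidableEq V]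
    (G : SimpleGraph V) (k : ℕ) (hk : 0 < k)
    (I : SR (KAg V)) (hI : IsSelInstance G k I)
    (X : Finset V) (hX : ∀ u ∈ X, ∀ v ∈ X, ¬ G.Adj u v) (hcard : X.card = k) :
    ∃ M : Finset (Sym2 (KAg V)),
      (I.induce (selAgents k ↑X)).IsStable M ∧
      ∀ x ∈ selAgents k (↑X : Set V), ∃ y, s(x, y) ∈ M := by
  classical
  obtain ⟨hacc, hvN, hvS, hsV, hsA, hab, hba⟩ := hI
  have asym : ∀ u x y : KAg V, I.pref u x y → I.pref u y x → False := fun u x y h1 h2 =>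
    I.pref_irrefl u x (I.pref_trans h1 h2)
  have hXne : X.Nonempty := Finset.card_pos.1 (hcard ▸ hk)
  have hne : Nonempty V := ⟨hXne.choose⟩
  set ρ := Fintype.equivFin V with hρ
  have accSV : ∀ t < k, ∀ v : V, I.accept (KAg.sel t) (KAg.vtx v) := fun t ht v =>
    (hacc _ _).2 (Or.inr (Or.inr (Or.inl ⟨v, t, ht, rfl, rfl⟩)))
  set r : ℕ → V → V → Prop := fun t u v =>
    if t < k then I.pref (KAg.sel t) (KAg.vtx u) (KAg.vtx v) else ρ u < ρ v with hr
  have htrans : ∀ t, ∀ x y z : V, r t x y → r t y z → r t x z := by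
    intro t x y z h1 h2
    by_cases ht : t < k
    · simp only [hr, if_pos ht] at h1 h2 ⊢
      exact I.pref_trans h1 h2
    · simp only [hr, if_neg ht] at h1 h2 ⊢
      exact h1.trans h2
  have htot : ∀ t, ∀ x y : V, x ≠ y → r t x y ∨ r t y x := by
    intro t x y hxy
    by_cases ht : t < k
    · simp only [hr, if_pos ht]
      exact I.pref_total (accSV t ht x) (accSV t ht y) (by simpa using hxy)
    · simp only [hr, if_neg ht]
      rcases lt_or_gt_of_ne (fun h : ρ x = ρ y => hxy (ρ.injective h)) with h | h
      · exact Or.inl h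
      · exact Or.inr h
  obtain ⟨f, hfX', hford'⟩ := sr_greedy r htrans htot k X hcard 0
  have hfX : ∀ i < k, f i ∈ X := hfX'
  have hford : ∀ i j, i < j → j < k → I.pref (KAg.sel i) (KAg.vtx (f i)) (KAg.vtx (f j)) := by
    intro i j hij hj
    have := hford' i j hij hj
    simpa [hr, if_pos (lt_trans hij hj)] using this
  have hfinj : ∀ i j, i < k → j < k → f i = f j → i = j := by
    intro i j hi hj hfe
    rcases lt_trichotomy i j with h | h | h
    · exact absurd (hfe ▸ hford i j h hj) (I.pref_irrefl _ _)
    · exact h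
    · exact absurd (hfe ▸ hford j i h hi) (I.pref_irrefl _ _)
  have himg : (Finset.range k).image f = X := by
    apply Finset.eq_of_subset_of_card_le
    · intro v hv
      obtain ⟨i, hi, rfl⟩ := Finset.mem_image.1 hv
      exact hfX i (Finset.mem_range.1 hi)
    · rw [Finset.card_image_of_injOn, Finset.card_range, hcard]
      intro i hi j hj hij
      exact hfinj i j (Finset.mem_range.1 hi) (Finset.mem_range.1 hj) hij
  have hpart : ∀ v ∈ X, ∃ i < k, f i = v := by
    intro v hv
    rw [← himg] at hv
    obtain ⟨i, hi, hfi⟩ := Finset.mem_image.1 hv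
    exact ⟨i, Finset.mem_range.1 hi, hfi⟩
  set T : Set (KAg V) := selAgents k ↑X with hT
  have hTsel : ∀ i < k, KAg.sel i ∈ T := fun i hi => Or.inl ⟨i, hi, Or.inl rfl⟩
  have hTa : ∀ i < k, KAg.a i ∈ T := fun i hi => Or.inl ⟨i, hi, Or.inr (Or.inl rfl)⟩
  have hTb : ∀ i < k, KAg.b i ∈ T := fun i hi => Or.inl ⟨i, hi, Or.inr (Or.inr rfl)⟩
  have hTv : ∀ v ∈ X, KAg.vtx v ∈ T := fun v hv => Or.inr ⟨v, hv, rfl⟩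
  have hvtxX : ∀ v : V, KAg.vtx v ∈ T → v ∈ X := by
    intro v hv
    rcases hv with ⟨i, _, h⟩ | ⟨w, hw, h⟩
    · rcases h with h | h | h <;> exact absurd h (by simp)
    · cases h
      exact hw
  set M : Finset (Sym2 (KAg V)) :=
    ((Finset.range k).image fun i => s(KAg.vtx (f i), KAg.sel i)) ∪
    ((Finset.range k).image fun i => s(KAg.a i, KAg.b i)) with hM
  have hmem : ∀ u v : KAg V, s(u, v) ∈ M ↔ ∃ i < k,
      (u = KAg.vtx (f i) ∧ v = KAg.sel i) ∨ (u = KAg.sel i ∧ v = KAg.vtx (f i)) ∨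
      (u = KAg.a i ∧ v = KAg.b i) ∨ (u = KAg.b i ∧ v = KAg.a i) := by
    intro u v
    constructor
    · intro h
      rcases Finset.mem_union.1 h with h | h <;>
      · obtain ⟨i, hi, heq⟩ := Finset.mem_image.1 h
        rw [Sym2.eq_iff] at heq
        exact ⟨i, Finset.mem_range.1 hi, by tauto⟩
    · rintro ⟨i, hi, h⟩
      rcases h with ⟨rfl, rfl⟩ | ⟨rfl, rfl⟩ | ⟨rfl, rfl⟩ | ⟨rfl, rfl⟩
      · exact Finset.mem_union_left _ (Finset.mem_image.2 ⟨i, Finset.mem_range.2 hi, rfl⟩)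
      · exact Finset.mem_union_left _ (Finset.mem_image.2 ⟨i, Finset.mem_range.2 hi, Sym2.eq_swap⟩)
      · exact Finset.mem_union_right _ (Finset.mem_image.2 ⟨i, Finset.mem_range.2 hi, rfl⟩)
      · exact Finset.mem_union_right _ (Finset.mem_image.2 ⟨i, Finset.mem_range.2 hi, Sym2.eq_swap⟩)
  have hblocksymm : ∀ u v, (I.induce T).Blocks M u v → (I.induce T).Blocks M v u :=
    fun u v h => ⟨(I.induce T).symm h.1, h.2.2, h.2.1⟩
  have key : ∀ u v, selBaseAcc G k u v → u ∈ T → v ∈ T → ¬ (I.induce T).Blocks M u v := by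
    rintro u v hbase hu hv ⟨hacc', hbu, hbv⟩
    rcases hbase with ⟨u0, v0, hadj, rfl, rfl⟩ | ⟨v0, i, hik, rfl, rfl⟩ |
      ⟨i, hik, rfl, hv'⟩ | ⟨i, hik, rfl, rfl⟩
    · exact hX u0 (hvtxX _ hu) v0 (hvtxX _ hv) hadj
    · obtain ⟨j, hjk, rfl⟩ := hpart v0 (hvtxX _ hu)
      have hb1 := hbu (KAg.sel j) ((hmem _ _).2 ⟨j, hjk, Or.inl ⟨rfl, rfl⟩⟩)
      have hb2 := hbv (KAg.vtx (f i)) ((hmem _ _).2 ⟨i, hik, Or.inr (Or.inl ⟨rfl, rfl⟩)⟩)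
      have p1 : I.pref (KAg.vtx (f j)) (KAg.sel i) (KAg.sel j) := hb1.1
      have p2 : I.pref (KAg.sel i) (KAg.vtx (f j)) (KAg.vtx (f i)) := hb2.1
      rcases lt_trichotomy i j with h | rfl | h
      · exact asym _ _ _ p2 (hford i j h hjk)
      · exact I.pref_irrefl _ _ p1
      · exact asym _ _ _ p1 (hvS (f j) j i h hik)
    · have hb := hbu (KAg.vtx (f i)) ((hmem _ _).2 ⟨i, hik, Or.inr (Or.inl ⟨rfl, rfl⟩)⟩)
      rcases hv' with rfl | rfl
      · exact asym _ _ _ hb.1 (hsV i hik (f i))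
      · exact asym _ _ _ hb.1 (I.pref_trans (hsV i hik (f i)) (hsA i hik))
    · have hb := hbu (KAg.b i) ((hmem _ _).2 ⟨i, hik, Or.inr (Or.inr (Or.inl ⟨rfl, rfl⟩))⟩)
      exact I.pref_irrefl _ _ hb.1
  refine ⟨M, ⟨⟨?_, ?_⟩, ?_⟩, ?_⟩
  · -- acceptable pairs
    intro u v h
    rw [hmem] at h
    obtain ⟨i, hi, h⟩ := h
    have haB : I.accept (KAg.vtx (f i)) (KAg.sel i) :=
      (hacc _ _).2 (Or.inl (Or.inr (Or.inl ⟨f i, i, hi, rfl, rfl⟩)))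
    have habI : I.accept (KAg.a i) (KAg.b i) :=
      (hacc _ _).2 (Or.inl (Or.inr (Or.inr (Or.inr ⟨i, hi, rfl, rfl⟩))))
    rcases h with ⟨rfl, rfl⟩ | ⟨rfl, rfl⟩ | ⟨rfl, rfl⟩ | ⟨rfl, rfl⟩
    · exact ⟨haB, hTv _ (hfX i hi), hTsel i hi⟩
    · exact ⟨I.symm haB, hTsel i hi, hTv _ (hfX i hi)⟩
    · exact ⟨habI, hTa i hi, hTb i hi⟩
    · exact ⟨I.symm habI, hTb i hi, hTa i hi⟩
  · -- at most one partner
    intro u v w h1 h2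
    rw [hmem] at h1 h2
    obtain ⟨i, hi, h1⟩ := h1
    obtain ⟨j, hj, h2⟩ := h2
    rcases h1 with ⟨rfl, rfl⟩ | ⟨rfl, rfl⟩ | ⟨rfl, rfl⟩ | ⟨rfl, rfl⟩ <;>
      rcases h2 with ⟨h, rfl⟩ | ⟨h, rfl⟩ | ⟨h, rfl⟩ | ⟨h, rfl⟩ <;>
      (first | (injection h; done) | (injection h with h; first | (subst h; rfl) | (rw [hfinj i j hi hj h])))
  · -- no blocking pairs
    intro u v hb
    obtain ⟨ha', hu, hv⟩ := hb.1
    rcases (hacc u v).1 ha' with h | h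
    · exact key u v h hu hv hb
    · exact key v u h hv hu (hblocksymm u v hb)
  · -- perfect
    intro x hx
    rcases hx with ⟨i, hik, h⟩ | ⟨v, hvX, rfl⟩
    · rcases h with rfl | rfl | rfl
      · exact ⟨KAg.vtx (f i), (hmem _ _).2 ⟨i, hik, Or.inr (Or.inl ⟨rfl, rfl⟩)⟩⟩
      · exact ⟨KAg.b i, (hmem _ _).2 ⟨i, hik, Or.inr (Or.inr (Or.inl ⟨rfl, rfl⟩))⟩⟩
      · exact ⟨KAg.a i, (hmem _ _).2 ⟨i, hik, Or.inr (Or.inr (Or.inr ⟨rfl, rfl⟩))⟩⟩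
    · obtain ⟨i, hik, rfl⟩ := hpart v hvX
      exact ⟨KAg.sel i, (hmem _ _).2 ⟨i, hik, Or.inl ⟨rfl, rfl⟩⟩⟩
end
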